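/- arXiv:1607.07737 — 6 statements merged into one kernel-verified Lean document; each statement's English description precedes it below -/
import Mathlib

section
/- Let d, k, and the nonnegative reals ℓ₁ᵤ, ℓᵤᵥ, ℓᵥ₂, ℓ₁₂, ℓ₁₃, ℓ₁₄, ℓ₂₃, ℓ₂₄, ℓ₃₄ be real numbers with k ≥ 1. Suppose that each of ℓ₁₂, ℓ₁₃, ℓ₁₄, ℓ₂₃, ℓ₂₄, ℓ₃₄ is at least k, that ℓ₁ᵤ + ℓᵤᵥ + ℓᵥ₂ = ℓ₁₂, and that each of the following five path lengths lies in the interval [d, d + k - 1]: ℓᵤᵥ; ℓ₁ᵤ + ℓ₁₄ + ℓ₂₄ + ℓᵥ₂; ℓ₁ᵤ + ℓ₁₃ + ℓ₂₃ + ℓᵥ₂; ℓ₁ᵤ + ℓ₁₃ + ℓ₃₄ + ℓ₂₄ + ℓᵥ₂; ℓ₁ᵤ + ℓ₁₄ + ℓ₃₄ + ℓ₂₃ + ℓᵥ₂. Then a contradiction follows (the system is infeasible). -/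
/-- Case (a) of the rerouting lemma for a subdivided tetrahedron:
the system of linear inequalities is infeasible. -/
theorem stmt0 (d k l1u luv lv2 l12 l13 l14 l23 l24 l34 : ℝ)
    (hk : 1 ≤ k)
    (h1u : 0 ≤ l1u) (huv : 0 ≤ luv) (hv2 : 0 ≤ lv2)
    (h12n : 0 ≤ l12) (h13n : 0 ≤ l13) (h14n : 0 ≤ l14)
    (h23n : 0 ≤ l23) (h24n : 0 ≤ l24) (h34n : 0 ≤ l34)
    (h12 : k ≤ l12) (h13 : k ≤ l13) (h14 : k ≤ l14)
    (h23 : k ≤ l23) (h24 : k ≤ l24) (h34 : k ≤ l34)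
    (hsplit : l1u + luv + lv2 = l12)
    (hp1 : d ≤ luv ∧ luv ≤ d + k - 1)
    (hp2 : d ≤ l1u + l14 + l24 + lv2 ∧ l1u + l14 + l24 + lv2 ≤ d + k - 1)
    (hp3 : d ≤ l1u + l13 + l23 + lv2 ∧ l1u + l13 + l23 + lv2 ≤ d + k - 1)
    (hp4 : d ≤ l1u + l13 + l34 + l24 + lv2 ∧ l1u + l13 + l34 + l24 + lv2 ≤ d + k - 1)
    (hp5 : d ≤ l1u + l14 + l34 + l23 + lv2 ∧ l1u + l14 + l34 + l23 + lv2 ≤ d + k - 1) :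
    False := by
  obtain ⟨a1,b1⟩:=hp1; obtain ⟨a2,b2⟩:=hp2; obtain ⟨a3,b3⟩:=hp3; obtain ⟨a4,b4⟩:=hp4; obtain ⟨a5,b5⟩:=hp5; linarith
end

section
/- Let d, k and nonnegative reals ℓ₁ᵤ, ℓᵤ₂, ℓ₁ᵥ, ℓᵥ₃, ℓ₁₂, ℓ₁₃, ℓ₁₄, ℓ₂₃, ℓ₂₄, ℓ₃₄ be real numbers with k ≥ 1. Suppose each of ℓ₁₂, ℓ₁₃, ℓ₁₄, ℓ₂₃, ℓ₂₄, ℓ₃₄ is at least k, that ℓ₁ᵤ + ℓᵤ₂ = ℓ₁₂ and ℓ₁ᵥ + ℓᵥ₃ = ℓ₁₃, and that each of the following six sums lies in [d, d + k - 1]: ℓ₁ᵤ + ℓ₁ᵥ; ℓᵤ₂ + ℓ₂₃ + ℓᵥ₃; ℓ₁ᵤ + ℓ₁₄ + ℓ₃₄ + ℓᵥ₃; ℓᵤ₂ + ℓ₂₄ + ℓ₃₄ + ℓᵥ₃; ℓᵤ₂ + ℓ₂₄ + ℓ₁₄ + ℓ₁ᵥ; ℓ₁ᵤ + ℓ₁₄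 + ℓ₂₄ + ℓ₂₃ + ℓᵥ₃. Then a contradiction follows (the system is infeasible). -/
/-- Case (b) of the rerouting lemma for a subdivided tetrahedron:
the system of linear inequalities is infeasible. -/
theorem stmt1 (d k l1u lu2 l1v lv3 l12 l13 l14 l23 l24 l34 : ℝ)
    (hk : 1 ≤ k)
    (h1u : 0 ≤ l1u) (hu2 : 0 ≤ lu2) (h1v : 0 ≤ l1v) (hv3 : 0 ≤ lv3)
    (h12n : 0 ≤ l12) (h13n : 0 ≤ l13) (h14n : 0 ≤ l14)
    (h23n : 0 ≤ l23) (h24n : 0 ≤ l24) (h34n : 0 ≤ l34)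
    (h12 : k ≤ l12) (h13 : k ≤ l13) (h14 : k ≤ l14)
    (h23 : k ≤ l23) (h24 : k ≤ l24) (h34 : k ≤ l34)
    (hsplitu : l1u + lu2 = l12) (hsplitv : l1v + lv3 = l13)
    (hp1 : d ≤ l1u + l1v ∧ l1u + l1v ≤ d + k - 1)
    (hp2 : d ≤ lu2 + l23 + lv3 ∧ lu2 + l23 + lv3 ≤ d + k - 1)
    (hp3 : d ≤ l1u + l14 + l34 + lv3 ∧ l1u + l14 + l34 + lv3 ≤ d + k - 1)
    (hp4 : d ≤ lu2 + l24 + l34 + lv3 ∧ lu2 + l24 + l34 + lv3 ≤ d + k - 1)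
    (hp5 : d ≤ lu2 + l24 + l14 + l1v ∧ lu2 + l24 + l14 + l1v ≤ d + k - 1)
    (hp6 : d ≤ l1u + l14 + l24 + l23 + lv3 ∧ l1u + l14 + l24 + l23 + lv3 ≤ d + k - 1) :
    False := by
  obtain ⟨a1,b1⟩ := hp1; obtain ⟨a2,b2⟩ := hp2; obtain ⟨a3,b3⟩ := hp3
  obtain ⟨a4,b4⟩ := hp4; obtain ⟨a5,b5⟩ := hp5; obtain ⟨a6,b6⟩ := hp6
  linarith
end

section
/- Let d, k and nonnegative reals ℓ₁ᵤ, ℓᵤ₂, ℓ₃ᵥ, ℓᵥ₄, ℓ₁₂, ℓ₁₃, ℓ₁₄, ℓ₂₃, ℓ₂₄, ℓ₃₄ be real numbers with k ≥ 1. Suppose each of ℓ₁₂, ℓ₁₃, ℓ₁₄, ℓ₂₃, ℓ₂₄, ℓ₃₄ is at least k, that ℓ₁ᵤ + ℓᵤ₂ = ℓ₁₂ and ℓ₃ᵥ + ℓᵥ₄ = ℓ₃₄, and that each of the following eight sums lies in [d, d + k - 1]: ℓ₁ᵤ + ℓ₁₃ + ℓ₃ᵥ; ℓ₁ᵤ +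 ℓ₁₄ + ℓᵥ₄; ℓᵤ₂ + ℓ₂₃ + ℓ₃ᵥ; ℓᵤ₂ + ℓ₂₄ + ℓᵥ₄; ℓ₁ᵤ + ℓ₁₃ + ℓ₂₃ + ℓ₂₄ + ℓᵥ₄; ℓ₁ᵤ + ℓ₁₄ + ℓ₂₄ + ℓ₂₃ + ℓ₃ᵥ; ℓᵤ₂ + ℓ₂₃ + ℓ₁₃ + ℓ₁₄ + ℓᵥ₄; ℓᵤ₂ + ℓ₂₄ + ℓ₁₄ + ℓ₁₃ + ℓ₃ᵥ. Then a contradiction follows (the system is infeasible). -/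
/-- Case (c) of the rerouting lemma for a subdivided tetrahedron:
the system of linear inequalities is infeasible. -/
theorem stmt2 (d k l1u lu2 l3v lv4 l12 l13 l14 l23 l24 l34 : ℝ)
    (hk : 1 ≤ k)
    (h1u : 0 ≤ l1u) (hu2 : 0 ≤ lu2) (h3v : 0 ≤ l3v) (hv4 : 0 ≤ lv4)
    (h12n : 0 ≤ l12) (h13n : 0 ≤ l13) (h14n : 0 ≤ l14)
    (h23n : 0 ≤ l23) (h24n : 0 ≤ l24) (h34n : 0 ≤ l34)
    (h12 : k ≤ l12) (h13 : k ≤ l13) (h14 : k ≤ l14)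
    (h23 : k ≤ l23) (h24 : k ≤ l24) (h34 : k ≤ l34)
    (hsplitu : l1u + lu2 = l12) (hsplitv : l3v + lv4 = l34)
    (hp1 : d ≤ l1u + l13 + l3v ∧ l1u + l13 + l3v ≤ d + k - 1)
    (hp2 : d ≤ l1u + l14 + lv4 ∧ l1u + l14 + lv4 ≤ d + k - 1)
    (hp3 : d ≤ lu2 + l23 + l3v ∧ lu2 + l23 + l3v ≤ d + k - 1)
    (hp4 : d ≤ lu2 + l24 + lv4 ∧ lu2 + l24 + lv4 ≤ d + k - 1)
    (hp5 : d ≤ l1u + l13 + l23 + l24 + lv4 ∧ l1u + l13 + l23 + l24 + lv4 ≤ d + k - 1)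
    (hp6 : d ≤ l1u + l14 + l24 + l23 + l3v ∧ l1u + l14 + l24 + l23 + l3v ≤ d + k - 1)
    (hp7 : d ≤ lu2 + l23 + l13 + l14 + lv4 ∧ lu2 + l23 + l13 + l14 + lv4 ≤ d + k - 1)
    (hp8 : d ≤ lu2 + l24 + l14 + l13 + l3v ∧ lu2 + l24 + l14 + l13 + l3v ≤ d + k - 1) :
    False := by
  obtain ⟨a1,b1⟩ := hp1; obtain ⟨a2,b2⟩ := hp2; obtain ⟨a3,b3⟩ := hp3; obtain ⟨a4,b4⟩ := hp4; obtain ⟨a5,b5⟩ := hp5; obtain ⟨a6,b6⟩ := hp6; obtain ⟨a7,b7⟩ := hp7; obtain ⟨a8,b8⟩ := hp8; linarith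
end

section
/- Let G be a simple graph, k ≥ 1, and let u, v be two distinct vertices of a subgraph M of G that is a subdivided tetrahedron F(k) (each edge of K₄ subdivided at least k times). Then M contains a (u,v)-path of length at least d_M(u,v) + k. -/
/-- A subdivided tetrahedron `F(k)` inside the graph `M`: four distinct branch
vertices `b 0, …, b 3`, and for each pair `i ≠ j` a path `P i j` of length at
least `k + 1` realizing the edge `bᵢbⱼ` of `K₄`, such that paths realizing
different edges meet only in common branch endpoints. -/
structure SubdivTetra {V : Type*} (M : SimpleGraph V) (k : ℕ) where
  b : Fin 4 → V
  binj : Function.Injective b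
  P : ∀ i j : Fin 4, M.Walk (b i) (b j)
  Psymm : ∀ i j, P j i = (P i j).reverse
  Ppath : ∀ i j, i ≠ j → (P i j).IsPath
  Plen : ∀ i j, i ≠ j → k + 1 ≤ (P i j).length
  Pdisj : ∀ i j i' j', i ≠ j → i' ≠ j' → ({i, j} : Set (Fin 4)) ≠ {i', j'} →
    ∀ v, v ∈ (P i j).support → v ∈ (P i' j').support →
      (v = b i ∨ v = b j) ∧ (v = b i' ∨ v = b j')

/-- The vertices of the subdivided tetrahedron. -/
def SubdivTetra.supp {V : Type*} {M : SimpleGraph V} {k : ℕ}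
    (T : SubdivTetra M k) : Set V :=
  {v | ∃ i j : Fin 4, i ≠ j ∧ v ∈ (T.P i j).support}

open SimpleGraph Walk

section Helpers
variable {V : Type*} {M : SimpleGraph V}

lemma append_isPath {u v w : V} {p : M.Walk u v} {q : M.Walk v w}
    (hp : p.IsPath) (hq : q.IsPath)
    (h : ∀ x ∈ p.support, x ∈ q.support → x = v) :
    (p.append q).IsPath := by
  rw [Walk.isPath_def, Walk.support_append]
  refine List.Nodup.append hp.support_nodup ?_ ?_
  · have := hq.support_nodup
    rw [q.support_eq_cons] at this
    exact (List.nodup_cons.mp this).2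
  · intro x hx1 hx2
    have hx2' : x ∈ q.support := List.mem_of_mem_tail hx2
    have hxv := h x hx1 hx2'
    subst hxv
    have := hq.support_nodup
    rw [q.support_eq_cons] at this
    exact (List.nodup_cons.mp this).1 hx2

lemma pair_ne_left {α : Type*} {i j i' j' : α} (h1 : i ≠ i') (h2 : i ≠ j') :
    ({i, j} : Set α) ≠ {i', j'} := by
  intro h
  have : i ∈ ({i', j'} : Set α) := h ▸ Set.mem_insert _ _
  rcases this with h | h
  · exact h1 h
  · exact h2 h

lemma mem_reverse_support {u v : V} (p : M.Walk u v) (x : V) :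
    x ∈ p.reverse.support ↔ x ∈ p.support := by
  rw [Walk.support_reverse, List.mem_reverse]

end Helpers

section Builders
variable {V : Type*} {M : SimpleGraph V} {k : ℕ} (T : SubdivTetra M k)

lemma SubdivTetra.bne {i j : Fin 4} (h : i ≠ j) : T.b i ≠ T.b j :=
  fun he => h (T.binj he)

lemma SubdivTetra.mem_symm {i j : Fin 4} {x : V} (h : x ∈ (T.P i j).support) :
    x ∈ (T.P j i).support := by
  rw [T.Psymm, Walk.support_reverse]
  exact List.mem_reverse.mpr h

lemma SubdivTetra.len_symm (i j : Fin 4) : (T.P j i).length = (T.P i j).length := by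
  rw [T.Psymm, Walk.length_reverse]

lemma SubdivTetra.eq_of {x : V} {a a' : Fin 4} (h : x = T.b a) (h' : x = T.b a') : a = a' :=
  T.binj (h.symm.trans h')

/-- If `x` lies on `P a c` and on `P c d` (three distinct indices), then `x = b c`. -/
lemma SubdivTetra.inter_shared {a c d : Fin 4} {x : V} (hac : a ≠ c) (hcd : c ≠ d)
    (had : a ≠ d) (h1 : x ∈ (T.P a c).support) (h2 : x ∈ (T.P c d).support) :
    x = T.b c := by
  have hd := T.Pdisj a c c d hac hcd (pair_ne_left hac had) x h1 h2
  rcases hd with ⟨h | h, h2' | h2'⟩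
  · exact absurd (T.eq_of h h2') hac
  · exact absurd (T.eq_of h h2') had
  · exact h
  · exact h

/-- Paths over disjoint index pairs do not intersect. -/
lemma SubdivTetra.inter_empty {a c d e : Fin 4} {x : V} (hac : a ≠ c) (hde : d ≠ e)
    (had : a ≠ d) (hae : a ≠ e) (hcd : c ≠ d) (hce : c ≠ e)
    (h1 : x ∈ (T.P a c).support) (h2 : x ∈ (T.P d e).support) : False := by
  have hd := T.Pdisj a c d e hac hde (pair_ne_left had hae) x h1 h2
  rcases hd with ⟨h | h, h2' | h2'⟩
  · exact absurd (T.eq_of h h2') had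
  · exact absurd (T.eq_of h h2') hae
  · exact absurd (T.eq_of h h2') hcd
  · exact absurd (T.eq_of h h2') hce

lemma buildZ (i j y z : Fin 4)
    (hij : i ≠ j) (hiy : i ≠ y) (hiz : i ≠ z) (hjy : j ≠ y) (hjz : j ≠ z) (hyz : y ≠ z)
    {u v : V} (s1 : M.Walk (T.b i) u) (s3 : M.Walk (T.b j) v)
    (h1 : s1.IsPath) (h3 : s3.IsPath)
    (hsub1 : ∀ x ∈ s1.support, x ∈ (T.P i j).support)
    (hsub3 : ∀ x ∈ s3.support, x ∈ (T.P i j).support)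
    (hbj : T.b j ∉ s1.support) (hbi : T.b i ∉ s3.support)
    (hdisj : ∀ x ∈ s1.support, x ∉ s3.support) :
    ∃ p : M.Walk u v, p.IsPath ∧
      p.length = s1.length + (T.P i y).length + (T.P y z).length + (T.P z j).length
        + s3.length := by
  refine ⟨s1.reverse.append ((T.P i y).append ((T.P y z).append ((T.P z j).append s3))),
    ?_, by simp [Walk.length_append, Walk.length_reverse]; omega⟩
  have hZJ : ((T.P z j).append s3).IsPath := by
    refine append_isPath (T.Ppath z j (Ne.symm hjz)) h3 ?_
    intro x hx hx'
    exact T.inter_shared (Ne.symm hjz) (Ne.symm hij) hiz.symm hx (T.mem_symm (hsub3 x hx'))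
  have hYZ : ((T.P y z).append ((T.P z j).append s3)).IsPath := by
    refine append_isPath (T.Ppath y z hyz) hZJ ?_
    intro x hx hx'
    rw [Walk.mem_support_append_iff] at hx'
    rcases hx' with hx' | hx'
    · exact T.inter_shared hyz hjz.symm hjy.symm hx hx'
    · exact absurd (hsub3 x hx') (fun h => T.inter_empty hyz hij hiy.symm hjy.symm
        hiz.symm hjz.symm hx h)
  have hIY : ((T.P i y).append ((T.P y z).append ((T.P z j).append s3))).IsPath := by
    refine append_isPath (T.Ppath i y hiy) hYZ ?_
    intro x hx hx'
    rw [Walk.mem_support_append_iff, Walk.mem_support_append_iff] at hx'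
    rcases hx' with hx' | hx' | hx'
    · exact T.inter_shared hiy hyz hiz hx hx'
    · exact absurd hx' (fun h => T.inter_empty hiy (Ne.symm hjz) hiz hij hyz hjy.symm hx h)
    · have hxi : x = T.b i := T.inter_shared hiy.symm hij hjy.symm
        (T.mem_symm hx) (hsub3 x hx')
      exact absurd (hxi ▸ hx') hbi
  refine append_isPath h1.reverse hIY ?_
  intro x hx hx'
  rw [mem_reverse_support] at hx
  rw [Walk.mem_support_append_iff, Walk.mem_support_append_iff,
    Walk.mem_support_append_iff] at hx'
  have hx1 := hsub1 x hx
  rcases hx' with hx' | hx' | hx' | hx'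
  · exact T.inter_shared hij.symm hiy hjy (T.mem_symm hx1) hx'
  · exact absurd hx' (fun h => T.inter_empty hij hyz hiy hiz hjy hjz hx1 h)
  · have hxj : x = T.b j := T.inter_shared hij hjz hiz
      hx1 (T.mem_symm hx')
    exact absurd (hxj ▸ hx) hbj
  · exact absurd hx' (hdisj x hx)

end Builders

section Builders2
variable {V : Type*} {M : SimpleGraph V} {k : ℕ} (T : SubdivTetra M k)

lemma buildOpp (i j y z : Fin 4)
    (hij : i ≠ j) (hiy : i ≠ y) (hiz : i ≠ z) (hjy : j ≠ y) (hjz : j ≠ z) (hyz : y ≠ z)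
    {u v : V} (s1 : M.Walk (T.b i) u) (s3 : M.Walk (T.b z) v)
    (h1 : s1.IsPath) (h3 : s3.IsPath)
    (hsub1 : ∀ x ∈ s1.support, x ∈ (T.P i j).support)
    (hsub3 : ∀ x ∈ s3.support, x ∈ (T.P z y).support)
    (hbj : T.b j ∉ s1.support) (hby : T.b y ∉ s3.support) :
    ∃ p : M.Walk u v, p.IsPath ∧
      p.length = s1.length + (T.P i y).length + (T.P y j).length + (T.P j z).length
        + s3.length := by
  refine ⟨s1.reverse.append ((T.P i y).append ((T.P y j).append ((T.P j z).append s3))),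
    ?_, by simp [Walk.length_append, Walk.length_reverse]; omega⟩
  have hJZ : ((T.P j z).append s3).IsPath := by
    refine append_isPath (T.Ppath j z hjz) h3 ?_
    intro x hx hx'
    exact T.inter_shared hjz (Ne.symm hyz) hjy hx (hsub3 x hx')
  have hYJ : ((T.P y j).append ((T.P j z).append s3)).IsPath := by
    refine append_isPath (T.Ppath y j (Ne.symm hjy)) hJZ ?_
    intro x hx hx'
    rw [Walk.mem_support_append_iff] at hx'
    rcases hx' with hx' | hx'
    · exact T.inter_shared (Ne.symm hjy) hjz hyz hx hx'
    · have hxy : x = T.b y := T.inter_shared (Ne.symm hjy).symm hyz hjz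
        (T.mem_symm hx) (T.mem_symm (hsub3 x hx'))
      exact absurd (hxy ▸ hx') hby
  have hIY : ((T.P i y).append ((T.P y j).append ((T.P j z).append s3))).IsPath := by
    refine append_isPath (T.Ppath i y hiy) hYJ ?_
    intro x hx hx'
    rw [Walk.mem_support_append_iff, Walk.mem_support_append_iff] at hx'
    rcases hx' with hx' | hx' | hx'
    · exact T.inter_shared hiy (Ne.symm hjy) hij hx hx'
    · exact absurd hx' (fun h => T.inter_empty hiy hjz hij hiz (Ne.symm hjy) hyz hx h)
    · exact T.inter_shared hiy hyz hiz hx (T.mem_symm (hsub3 x hx'))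
  refine append_isPath h1.reverse hIY ?_
  intro x hx hx'
  rw [mem_reverse_support] at hx
  rw [Walk.mem_support_append_iff, Walk.mem_support_append_iff,
    Walk.mem_support_append_iff] at hx'
  have hx1 := hsub1 x hx
  rcases hx' with hx' | hx' | hx' | hx'
  · exact T.inter_shared hij.symm hiy hjy (T.mem_symm hx1) hx'
  · have hxj : x = T.b j := T.inter_shared hij hjy hiy hx1 (T.mem_symm hx')
    exact absurd (hxj ▸ hx) hbj
  · have hxj : x = T.b j := T.inter_shared hij hjz hiz hx1 hx'
    exact absurd (hxj ▸ hx) hbj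
  · exact absurd (hsub3 x hx') (fun h => T.inter_empty hij (Ne.symm hyz) hiz hiy hjz hjy
      hx1 h)

lemma buildAdjA (i j y z : Fin 4)
    (hij : i ≠ j) (hiy : i ≠ y) (hiz : i ≠ z) (hjy : j ≠ y) (hjz : j ≠ z) (hyz : y ≠ z)
    {u v : V} (s1 : M.Walk (T.b i) u) (s3 : M.Walk (T.b z) v)
    (h1 : s1.IsPath) (h3 : s3.IsPath)
    (hsub1 : ∀ x ∈ s1.support, x ∈ (T.P i j).support)
    (hsub3 : ∀ x ∈ s3.support, x ∈ (T.P z j).support)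
    (hbj1 : T.b j ∉ s1.support) (hbj3 : T.b j ∉ s3.support) :
    ∃ p : M.Walk u v, p.IsPath ∧
      p.length = s1.length + (T.P i y).length + (T.P y z).length + s3.length := by
  refine ⟨s1.reverse.append ((T.P i y).append ((T.P y z).append s3)),
    ?_, by simp [Walk.length_append, Walk.length_reverse]; omega⟩
  have hYZ : ((T.P y z).append s3).IsPath := by
    refine append_isPath (T.Ppath y z hyz) h3 ?_
    intro x hx hx'
    exact T.inter_shared hyz (Ne.symm hjz) (Ne.symm hjy) hx (hsub3 x hx')
  have hIY : ((T.P i y).append ((T.P y z).append s3)).IsPath := by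
    refine append_isPath (T.Ppath i y hiy) hYZ ?_
    intro x hx hx'
    rw [Walk.mem_support_append_iff] at hx'
    rcases hx' with hx' | hx'
    · exact T.inter_shared hiy hyz hiz hx hx'
    · exact absurd (hsub3 x hx') (fun h => T.inter_empty hiy (Ne.symm hjz) hiz hij hyz
        (Ne.symm hjy) hx h)
  refine append_isPath h1.reverse hIY ?_
  intro x hx hx'
  rw [mem_reverse_support] at hx
  rw [Walk.mem_support_append_iff, Walk.mem_support_append_iff] at hx'
  have hx1 := hsub1 x hx
  rcases hx' with hx' | hx' | hx'
  · exact T.inter_shared hij.symm hiy hjy (T.mem_symm hx1) hx'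
  · exact absurd hx' (fun h => T.inter_empty hij hyz hiy hiz hjy hjz hx1 h)
  · have hxj : x = T.b j := T.inter_shared hij hjz hiz hx1 (T.mem_symm (hsub3 x hx'))
    exact absurd (hxj ▸ hx) hbj1

lemma buildAdjB (i j y z : Fin 4)
    (hij : i ≠ j) (hiy : i ≠ y) (hiz : i ≠ z) (hjy : j ≠ y) (hjz : j ≠ z) (hyz : y ≠ z)
    {u v : V} (s1 : M.Walk (T.b j) u) (s3 : M.Walk (T.b z) v)
    (h1 : s1.IsPath) (h3 : s3.IsPath)
    (hsub1 : ∀ x ∈ s1.support, x ∈ (T.P j i).support)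
    (hsub3 : ∀ x ∈ s3.support, x ∈ (T.P z j).support)
    (hbi1 : T.b i ∉ s1.support) (hbj3 : T.b j ∉ s3.support) :
    ∃ p : M.Walk u v, p.IsPath ∧
      p.length = s1.length + (T.P j y).length + (T.P y i).length + (T.P i z).length
        + s3.length := by
  refine ⟨s1.reverse.append ((T.P j y).append ((T.P y i).append ((T.P i z).append s3))),
    ?_, by simp [Walk.length_append, Walk.length_reverse]; omega⟩
  have hIZ : ((T.P i z).append s3).IsPath := by
    refine append_isPath (T.Ppath i z hiz) h3 ?_
    intro x hx hx'
    exact T.inter_shared hiz (Ne.symm hjz) hij hx (hsub3 x hx')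
  have hYI : ((T.P y i).append ((T.P i z).append s3)).IsPath := by
    refine append_isPath (T.Ppath y i (Ne.symm hiy)) hIZ ?_
    intro x hx hx'
    rw [Walk.mem_support_append_iff] at hx'
    rcases hx' with hx' | hx'
    · exact T.inter_shared (Ne.symm hiy) hiz hyz hx hx'
    · exact absurd (hsub3 x hx') (fun h => T.inter_empty (Ne.symm hiy) (Ne.symm hjz)
        hyz hjy.symm hiz hij hx h)
  have hJY : ((T.P j y).append ((T.P y i).append ((T.P i z).append s3))).IsPath := by
    refine append_isPath (T.Ppath j y hjy) hYI ?_
    intro x hx hx'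
    rw [Walk.mem_support_append_iff, Walk.mem_support_append_iff] at hx'
    rcases hx' with hx' | hx' | hx'
    · exact T.inter_shared hjy (Ne.symm hiy) hij.symm hx hx'
    · exact absurd hx' (fun h => T.inter_empty hjy hiz hij.symm hjz (Ne.symm hiy) hyz hx h)
    · have hxj : x = T.b j := T.inter_shared (Ne.symm hjy) hjz hyz
        (T.mem_symm hx) (T.mem_symm (hsub3 x hx'))
      exact absurd (hxj ▸ hx') hbj3
  refine append_isPath h1.reverse hJY ?_
  intro x hx hx'
  rw [mem_reverse_support] at hx
  rw [Walk.mem_support_append_iff, Walk.mem_support_append_iff,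
    Walk.mem_support_append_iff] at hx'
  have hx1 : x ∈ (T.P i j).support := T.mem_symm (hsub1 x hx)
  rcases hx' with hx' | hx' | hx' | hx'
  · exact T.inter_shared hij hjy hiy hx1 hx'
  · have hxi : x = T.b i := T.inter_shared hij.symm hiy hjy (T.mem_symm hx1)
      (T.mem_symm hx')
    exact absurd (hxi ▸ hx) hbi1
  · have hxi : x = T.b i := T.inter_shared hij.symm hiz hjz (T.mem_symm hx1) hx'
    exact absurd (hxi ▸ hx) hbi1
  · have hxj : x = T.b j := T.inter_shared hij hjz hiz hx1 (T.mem_symm (hsub3 x hx'))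
    exact absurd (hxj ▸ (hsub3 x hx')) (fun h => hbj3 (hxj ▸ hx'))

lemma buildBranch (i j y z : Fin 4)
    (hij : i ≠ j) (hiy : i ≠ y) (hiz : i ≠ z) (hjy : j ≠ y) (hjz : j ≠ z) (hyz : y ≠ z)
    {v : V} (s3 : M.Walk (T.b z) v) (h3 : s3.IsPath)
    (hsub3 : ∀ x ∈ s3.support, x ∈ (T.P z j).support)
    (hbj3 : T.b j ∉ s3.support) :
    ∃ p : M.Walk (T.b i) v, p.IsPath ∧
      p.length = (T.P i j).length + (T.P j y).length + (T.P y z).length + s3.length := by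
  refine ⟨(T.P i j).append ((T.P j y).append ((T.P y z).append s3)),
    ?_, by simp [Walk.length_append]; omega⟩
  have hYZ : ((T.P y z).append s3).IsPath := by
    refine append_isPath (T.Ppath y z hyz) h3 ?_
    intro x hx hx'
    exact T.inter_shared hyz (Ne.symm hjz) (Ne.symm hjy) hx (hsub3 x hx')
  have hJY : ((T.P j y).append ((T.P y z).append s3)).IsPath := by
    refine append_isPath (T.Ppath j y hjy) hYZ ?_
    intro x hx hx'
    rw [Walk.mem_support_append_iff] at hx'
    rcases hx' with hx' | hx'
    · exact T.inter_shared hjy hyz hjz hx hx'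
    · have hxj : x = T.b j := T.inter_shared (Ne.symm hjy) hjz hyz
        (T.mem_symm hx) (T.mem_symm (hsub3 x hx'))
      exact absurd (hxj ▸ hx') hbj3
  refine append_isPath (T.Ppath i j hij) hJY ?_
  intro x hx hx'
  rw [Walk.mem_support_append_iff, Walk.mem_support_append_iff] at hx'
  rcases hx' with hx' | hx' | hx'
  · exact T.inter_shared hij hjy hiy hx hx'
  · exact absurd hx' (fun h => T.inter_empty hij hyz hiy hiz hjy hjz hx h)
  · have hxj : x = T.b j := T.inter_shared hij hjz hiz hx (T.mem_symm (hsub3 x hx'))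
    exact absurd (hxj ▸ hx') hbj3

end Builders2

section Helpers2
variable {V : Type*} {M : SimpleGraph V}

lemma takeUntil_dropUntil_inter [DecidableEq V] {a c : V} {p : M.Walk a c} (hp : p.IsPath)
    {x : V} (hx : x ∈ p.support) {y : V}
    (h1 : y ∈ (p.takeUntil x hx).support) (h2 : y ∈ (p.dropUntil x hx).support) : y = x := by
  have hnd : p.support.Nodup := hp.support_nodup
  rw [← p.take_spec hx, Walk.support_append] at hnd
  by_contra hne
  have h2' : y ∈ (p.dropUntil x hx).support.tail := by
    have hc := (p.dropUntil x hx).support_eq_cons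
    rw [hc] at h2
    rcases List.mem_cons.mp h2 with h | h
    · exact absurd h hne
    · exact h
  exact (List.nodup_append'.mp hnd).2.2 h1 h2'

lemma end_not_mem_takeUntil [DecidableEq V] {a c : V} {p : M.Walk a c} (hp : p.IsPath)
    {x : V} (hx : x ∈ p.support) (hne : x ≠ c) : c ∉ (p.takeUntil x hx).support := by
  intro h
  exact hne (takeUntil_dropUntil_inter hp hx h (Walk.end_mem_support _)).symm

lemma loop_support {a : V} {p : M.Walk a a} (hp : p.IsPath) : ∀ x ∈ p.support, x = a := by
  cases p with
  | nil => intro x hx; simpa using hx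
  | cons h q =>
    exfalso
    have := hp.support_nodup
    rw [Walk.support_cons] at this
    exact (List.nodup_cons.mp this).1 q.end_mem_support

lemma loop_support' {a c : V} (p : M.Walk a c) (hp : p.IsPath) (hac : a = c) :
    ∀ x ∈ p.support, x = a := by
  subst hac; exact loop_support hp

lemma fin4_fourth : ∀ i j z : Fin 4, i ≠ j → i ≠ z → j ≠ z →
    ∃ y, i ≠ y ∧ j ≠ y ∧ z ≠ y := by decide

lemma fin4_two : ∀ i j : Fin 4, i ≠ j →
    ∃ y z, i ≠ y ∧ j ≠ y ∧ i ≠ z ∧ j ≠ z ∧ y ≠ z := by decide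

end Helpers2

section Cases
variable {V : Type*} {M : SimpleGraph V} {k : ℕ} (T : SubdivTetra M k)

lemma caseOpp [DecidableEq V] (i j y z : Fin 4)
    (hij : i ≠ j) (hiy : i ≠ y) (hiz : i ≠ z) (hjy : j ≠ y) (hjz : j ≠ z) (hyz : y ≠ z)
    {u v : V} (hu' : u ∈ (T.P i j).support) (hv' : v ∈ (T.P y z).support)
    (hui : u ≠ T.b i) (huj : u ≠ T.b j) (hvy : v ≠ T.b y) (hvz : v ≠ T.b z) :
    ∃ p : M.Walk u v, p.IsPath ∧ M.dist u v + k ≤ p.length := by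
  have hu2 : u ∈ (T.P j i).support := T.mem_symm hu'
  have hv2 : v ∈ (T.P z y).support := T.mem_symm hv'
  set s1 := (T.P i j).takeUntil u hu' with hs1
  set s1' := (T.P j i).takeUntil u hu2 with hs1'
  set s3 := (T.P z y).takeUntil v hv2 with hs3
  have h1 : s1.IsPath := (T.Ppath i j hij).takeUntil hu'
  have h1' : s1'.IsPath := (T.Ppath j i (Ne.symm hij)).takeUntil hu2
  have h3 : s3.IsPath := (T.Ppath z y (Ne.symm hyz)).takeUntil hv2
  have hbj1 : T.b j ∉ s1.support := end_not_mem_takeUntil (T.Ppath i j hij) hu' huj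
  have hbi1 : T.b i ∉ s1'.support := end_not_mem_takeUntil (T.Ppath j i (Ne.symm hij)) hu2 hui
  have hby3 : T.b y ∉ s3.support := end_not_mem_takeUntil (T.Ppath z y (Ne.symm hyz)) hv2 hvy
  have hsub1 : ∀ x ∈ s1.support, x ∈ (T.P i j).support :=
    fun x hx => (T.P i j).support_takeUntil_subset hu' hx
  have hsub1' : ∀ x ∈ s1'.support, x ∈ (T.P j i).support :=
    fun x hx => (T.P j i).support_takeUntil_subset hu2 hx
  have hsub3 : ∀ x ∈ s3.support, x ∈ (T.P z y).support :=
    fun x hx => (T.P z y).support_takeUntil_subset hv2 hx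
  obtain ⟨p1, hp1, hl1⟩ := buildOpp T i j y z hij hiy hiz hjy hjz hyz
    s1 s3 h1 h3 hsub1 hsub3 hbj1 hby3
  obtain ⟨p2, hp2, hl2⟩ := buildOpp T j i y z (Ne.symm hij) hjy hjz hiy hiz hyz
    s1' s3 h1' h3 hsub1' hsub3 hbi1 hby3
  have hd1 := SimpleGraph.dist_le (s1.reverse.append ((T.P i z).append s3))
  have hd2 := SimpleGraph.dist_le (s1'.reverse.append ((T.P j z).append s3))
  simp only [Walk.length_append, Walk.length_reverse] at hd1 hd2
  have l1 := T.Plen i y hiy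
  have l2 := T.Plen y j (Ne.symm hjy)
  have l3 := T.Plen j y hjy
  have l4 := T.Plen y i (Ne.symm hiy)
  by_cases hcc : M.dist u v + k ≤ p1.length
  · exact ⟨p1, hp1, hcc⟩
  · exact ⟨p2, hp2, by omega⟩

lemma caseAdj [DecidableEq V] (i j z y : Fin 4)
    (hij : i ≠ j) (hiy : i ≠ y) (hiz : i ≠ z) (hjy : j ≠ y) (hjz : j ≠ z) (hyz : y ≠ z)
    {u v : V} (hu' : u ∈ (T.P i j).support) (hv' : v ∈ (T.P j z).support)
    (hui : u ≠ T.b i) (huj : u ≠ T.b j) (hvj : v ≠ T.b j) (hvz : v ≠ T.b z) :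
    ∃ p : M.Walk u v, p.IsPath ∧ M.dist u v + k ≤ p.length := by
  have hu2 : u ∈ (T.P j i).support := T.mem_symm hu'
  have hv2 : v ∈ (T.P z j).support := T.mem_symm hv'
  set s1 := (T.P i j).takeUntil u hu' with hs1
  set s1' := (T.P j i).takeUntil u hu2 with hs1'
  set s3 := (T.P z j).takeUntil v hv2 with hs3
  have h1 : s1.IsPath := (T.Ppath i j hij).takeUntil hu'
  have h1' : s1'.IsPath := (T.Ppath j i (Ne.symm hij)).takeUntil hu2
  have h3 : s3.IsPath := (T.Ppath z j (Ne.symm hjz)).takeUntil hv2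
  have hbj1 : T.b j ∉ s1.support := end_not_mem_takeUntil (T.Ppath i j hij) hu' huj
  have hbi1 : T.b i ∉ s1'.support := end_not_mem_takeUntil (T.Ppath j i (Ne.symm hij)) hu2 hui
  have hbj3 : T.b j ∉ s3.support := end_not_mem_takeUntil (T.Ppath z j (Ne.symm hjz)) hv2 hvj
  have hsub1 : ∀ x ∈ s1.support, x ∈ (T.P i j).support :=
    fun x hx => (T.P i j).support_takeUntil_subset hu' hx
  have hsub1' : ∀ x ∈ s1'.support, x ∈ (T.P j i).support :=
    fun x hx => (T.P j i).support_takeUntil_subset hu2 hx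
  have hsub3 : ∀ x ∈ s3.support, x ∈ (T.P z j).support :=
    fun x hx => (T.P z j).support_takeUntil_subset hv2 hx
  obtain ⟨p1, hp1, hl1⟩ := buildAdjA T i j y z hij hiy hiz hjy hjz hyz
    s1 s3 h1 h3 hsub1 hsub3 hbj1 hbj3
  obtain ⟨p2, hp2, hl2⟩ := buildAdjB T i j y z hij hiy hiz hjy hjz hyz
    s1' s3 h1' h3 hsub1' hsub3 hbi1 hbj3
  have hd1 := SimpleGraph.dist_le (s1.reverse.append ((T.P i z).append s3))
  have hd2 := SimpleGraph.dist_le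
    (s1'.reverse.append ((T.P j y).append ((T.P y z).append s3)))
  simp only [Walk.length_append, Walk.length_reverse] at hd1 hd2
  have l1 := T.Plen i y hiy
  have l2 := T.Plen y i (Ne.symm hiy)
  by_cases hcc : M.dist u v + k ≤ p1.length
  · exact ⟨p1, hp1, hcc⟩
  · exact ⟨p2, hp2, by omega⟩

lemma caseBranch [DecidableEq V] (i j z y : Fin 4)
    (hij : i ≠ j) (hiy : i ≠ y) (hiz : i ≠ z) (hjy : j ≠ y) (hjz : j ≠ z) (hyz : y ≠ z)
    {v : V} (hv' : v ∈ (T.P j z).support)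
    (hvj : v ≠ T.b j) (hvz : v ≠ T.b z) :
    ∃ p : M.Walk (T.b i) v, p.IsPath ∧ M.dist (T.b i) v + k ≤ p.length := by
  have hv2 : v ∈ (T.P z j).support := T.mem_symm hv'
  set s3z := (T.P z j).takeUntil v hv2 with hs3z
  set s3j := (T.P j z).takeUntil v hv' with hs3j
  have h3z : s3z.IsPath := (T.Ppath z j (Ne.symm hjz)).takeUntil hv2
  have h3j : s3j.IsPath := (T.Ppath j z hjz).takeUntil hv'
  have hbj3 : T.b j ∉ s3z.support := end_not_mem_takeUntil (T.Ppath z j (Ne.symm hjz)) hv2 hvj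
  have hbz3 : T.b z ∉ s3j.support := end_not_mem_takeUntil (T.Ppath j z hjz) hv' hvz
  have hsub3z : ∀ x ∈ s3z.support, x ∈ (T.P z j).support :=
    fun x hx => (T.P z j).support_takeUntil_subset hv2 hx
  have hsub3j : ∀ x ∈ s3j.support, x ∈ (T.P j z).support :=
    fun x hx => (T.P j z).support_takeUntil_subset hv' hx
  obtain ⟨p1, hp1, hl1⟩ := buildBranch T i j y z hij hiy hiz hjy hjz hyz
    s3z h3z hsub3z hbj3
  obtain ⟨p2, hp2, hl2⟩ := buildBranch T i z y j hiz hiy hij (Ne.symm hyz) (Ne.symm hjz)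
    (Ne.symm hjy) s3j h3j hsub3j hbz3
  have hd1 := SimpleGraph.dist_le ((T.P i j).append s3j)
  have hd2 := SimpleGraph.dist_le ((T.P i z).append s3z)
  simp only [Walk.length_append] at hd1 hd2
  have l1 := T.Plen j y hjy
  have l2 := T.Plen y z hyz
  have l3 := T.Plen z y (Ne.symm hyz)
  have l4 := T.Plen y j (Ne.symm hjy)
  by_cases hcc : M.dist (T.b i) v + k ≤ p1.length
  · exact ⟨p1, hp1, hcc⟩
  · exact ⟨p2, hp2, by omega⟩

lemma caseA [DecidableEq V] (i j y z : Fin 4)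
    (hij : i ≠ j) (hiy : i ≠ y) (hiz : i ≠ z) (hjy : j ≠ y) (hjz : j ≠ z) (hyz : y ≠ z)
    {u v : V} (hu' : u ∈ (T.P i j).support) (hv' : v ∈ (T.P i j).support) (huv : u ≠ v) :
    ∃ p : M.Walk u v, p.IsPath ∧ M.dist u v + k ≤ p.length := by
  have hPij := T.Ppath i j hij
  set q := (T.P i j).takeUntil v hv' with hq
  set r := (T.P i j).dropUntil v hv' with hr
  have hqp : q.IsPath := hPij.takeUntil hv'
  have hrp : r.IsPath := hPij.dropUntil hv'
  by_cases hc : u ∈ q.support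
  · -- u comes before v on P i j
    set s1 := q.takeUntil u hc with hs1
    set s3 := r.reverse with hs3
    have h1 : s1.IsPath := hqp.takeUntil hc
    have h3 : s3.IsPath := hrp.reverse
    have hsub1 : ∀ x ∈ s1.support, x ∈ (T.P i j).support :=
      fun x hx => (T.P i j).support_takeUntil_subset hv' (q.support_takeUntil_subset hc hx)
    have hsub3 : ∀ x ∈ s3.support, x ∈ (T.P i j).support := fun x hx =>
      (T.P i j).support_dropUntil_subset hv' ((mem_reverse_support r x).mp hx)
    have hvq : v ∉ s1.support := end_not_mem_takeUntil hqp hc huv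
    have hbj : T.b j ∉ s1.support := by
      intro h
      have hbq : T.b j ∈ q.support := q.support_takeUntil_subset hc h
      have hbr : T.b j ∈ r.support := Walk.end_mem_support r
      have hbv := takeUntil_dropUntil_inter hPij hv' hbq hbr
      exact hvq (hbv ▸ h)
    have hbi : T.b i ∉ s3.support := by
      intro h
      have hbr : T.b i ∈ r.support := (mem_reverse_support r _).mp h
      have hbv : T.b i = v :=
        takeUntil_dropUntil_inter hPij hv' (Walk.start_mem_support q) hbr
      have hueq := loop_support' q hqp hbv u hc
      exact huv (hueq.trans hbv)
    have hdisj : ∀ x ∈ s1.support, x ∉ s3.support := by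
      intro x hx hx3
      have hxq : x ∈ q.support := q.support_takeUntil_subset hc hx
      have hxr : x ∈ r.support := (mem_reverse_support r x).mp hx3
      have hxv := takeUntil_dropUntil_inter hPij hv' hxq hxr
      exact hvq (hxv ▸ hx)
    obtain ⟨p1, hp1, hl1⟩ := buildZ T i j y z hij hiy hiz hjy hjz hyz
      s1 s3 h1 h3 hsub1 hsub3 hbj hbi hdisj
    obtain ⟨p2, hp2, hl2⟩ := buildZ T i j z y hij hiz hiy hjz hjy (Ne.symm hyz)
      s1 s3 h1 h3 hsub1 hsub3 hbj hbi hdisj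
    have hd1 := SimpleGraph.dist_le (s1.reverse.append ((T.P i y).append ((T.P y j).append s3)))
    have hd2 := SimpleGraph.dist_le (s1.reverse.append ((T.P i z).append ((T.P z j).append s3)))
    simp only [Walk.length_append, Walk.length_reverse] at hd1 hd2
    have l1 := T.Plen y z hyz
    have l2 := T.Plen z y (Ne.symm hyz)
    by_cases hcc : M.dist u v + k ≤ p1.length
    · exact ⟨p1, hp1, hcc⟩
    · exact ⟨p2, hp2, by omega⟩
  · -- v comes before u on P i j
    have hur : u ∈ r.support := by
      have hmem : u ∈ q.support ++ r.support.tail := by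
        rw [← Walk.support_append, Walk.take_spec]
        exact hu'
      rcases List.mem_append.mp hmem with h | h
      · exact absurd h hc
      · exact List.mem_of_mem_tail h
    set s1 := q with hs1
    set s3 := (r.dropUntil u hur).reverse with hs3
    have h3 : s3.IsPath := (hrp.dropUntil hur).reverse
    have hsub1 : ∀ x ∈ s1.support, x ∈ (T.P i j).support :=
      fun x hx => (T.P i j).support_takeUntil_subset hv' hx
    have hsub3 : ∀ x ∈ s3.support, x ∈ (T.P i j).support := fun x hx =>
      (T.P i j).support_dropUntil_subset hv'
        (r.support_dropUntil_subset hur ((mem_reverse_support _ x).mp hx))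
    have hbj : T.b j ∉ s1.support := by
      intro h
      have hbr : T.b j ∈ r.support := Walk.end_mem_support r
      have hbv := takeUntil_dropUntil_inter hPij hv' h hbr
      have hueq := loop_support' r hrp hbv.symm u hur
      exact huv (hueq.symm ▸ rfl : u = v)
    have hbi : T.b i ∉ s3.support := by
      intro h
      have hdu : T.b i ∈ (r.dropUntil u hur).support := (mem_reverse_support _ _).mp h
      have hbr : T.b i ∈ r.support := r.support_dropUntil_subset hur hdu
      have hbv : T.b i = v :=
        takeUntil_dropUntil_inter hPij hv' (Walk.start_mem_support q) hbr
      have htu : T.b i ∈ (r.takeUntil u hur).support := by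
        rw [hbv]; exact Walk.start_mem_support _
      have := takeUntil_dropUntil_inter hrp hur htu hdu
      exact huv (this.symm.trans hbv)
    have hdisj : ∀ x ∈ s1.support, x ∉ s3.support := by
      intro x hx hx3
      have hdu : x ∈ (r.dropUntil u hur).support := (mem_reverse_support _ x).mp hx3
      have hxr : x ∈ r.support := r.support_dropUntil_subset hur hdu
      have hxv : x = v := takeUntil_dropUntil_inter hPij hv' hx hxr
      subst hxv
      have : x = u := takeUntil_dropUntil_inter hrp hur (Walk.start_mem_support _) hdu
      exact huv this.symm
    obtain ⟨p1, hp1, hl1⟩ := buildZ T i j y z hij hiy hiz hjy hjz hyz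
      s1 s3 hqp h3 hsub1 hsub3 hbj hbi hdisj
    obtain ⟨p2, hp2, hl2⟩ := buildZ T i j z y hij hiz hiy hjz hjy (Ne.symm hyz)
      s1 s3 hqp h3 hsub1 hsub3 hbj hbi hdisj
    have hd1 := SimpleGraph.dist_le (s1.reverse.append ((T.P i y).append ((T.P y j).append s3)))
    have hd2 := SimpleGraph.dist_le (s1.reverse.append ((T.P i z).append ((T.P z j).append s3)))
    simp only [Walk.length_append, Walk.length_reverse] at hd1 hd2
    have l1 := T.Plen y z hyz
    have l2 := T.Plen z y (Ne.symm hyz)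
    have hdc : M.dist u v = M.dist v u := SimpleGraph.dist_comm
    by_cases hcc : M.dist u v + k ≤ p1.length
    · exact ⟨p1.reverse, hp1.reverse, by rw [Walk.length_reverse]; omega⟩
    · exact ⟨p2.reverse, hp2.reverse, by rw [Walk.length_reverse]; omega⟩

end Cases

/-- Rerouting in subdivided tetrahedra: if `M` is a subgraph of `G` that is a
subdivided tetrahedron `F(k)` with `k ≥ 1`, then for any two distinct vertices
`u, v` of `M` there is a `(u,v)`-path in `M` of length at least
`d_M(u,v) + k`. -/
theorem stmt10 {V : Type*} (G M : SimpleGraph V) (hMG : M ≤ G)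
    (k : ℕ) (hk : 1 ≤ k) (T : SubdivTetra M k)
    (hedge : ∀ e ∈ M.edgeSet, ∃ i j : Fin 4, i ≠ j ∧ e ∈ (T.P i j).edges)
    (u v : V) (hu : u ∈ T.supp) (hv : v ∈ T.supp) (huv : u ≠ v) :
    ∃ p : M.Walk u v, p.IsPath ∧ M.dist u v + k ≤ p.length := by
  classical
  obtain ⟨i0, j0, hij0, hu0⟩ := hu
  obtain ⟨i1, j1, hij1, hv0⟩ := hv
  by_cases hA : ∃ i j, i ≠ j ∧ u ∈ (T.P i j).support ∧ v ∈ (T.P i j).support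
  · obtain ⟨i, j, hij, hu', hv'⟩ := hA
    obtain ⟨y, z, h1, h2, h3, h4, h5⟩ := fin4_two i j hij
    exact caseA T i j y z hij h1 h3 h2 h4 h5 hu' hv' huv
  · push_neg at hA
    by_cases hub : ∃ x, u = T.b x
    · obtain ⟨x, rfl⟩ := hub
      have hvnb : ∀ w : Fin 4, v ≠ T.b w := by
        intro w hw
        have hwx : x ≠ w := fun h => huv (by rw [h, ← hw])
        exact hA x w hwx (Walk.start_mem_support _)
          (by rw [hw]; exact Walk.end_mem_support _)
      have hxi1 : x ≠ i1 := by
        intro h; subst h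
        exact hA x j1 hij1 (Walk.start_mem_support _) hv0
      have hxj1 : x ≠ j1 := by
        intro h; subst h
        exact hA i1 x hij1 (Walk.end_mem_support _) hv0
      obtain ⟨y, hy1, hy2, hy3⟩ := fin4_fourth x i1 j1 hxi1 hxj1 hij1
      exact caseBranch T x i1 j1 y hxi1 hy1 hxj1 hy2 hij1 (Ne.symm hy3)
        hv0 (hvnb i1) (hvnb j1)
    · by_cases hvb : ∃ x, v = T.b x
      · obtain ⟨x, rfl⟩ := hvb
        have hunb : ∀ w, u ≠ T.b w := fun w hw => hub ⟨w, hw⟩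
        have hxi0 : x ≠ i0 := fun h =>
          hA i0 j0 hij0 hu0 (by rw [h]; exact Walk.start_mem_support _)
        have hxj0 : x ≠ j0 := fun h =>
          hA i0 j0 hij0 hu0 (by rw [h]; exact Walk.end_mem_support _)
        obtain ⟨y, hy1, hy2, hy3⟩ := fin4_fourth x i0 j0 hxi0 hxj0 hij0
        obtain ⟨p, hp, hlen⟩ := caseBranch T x i0 j0 y hxi0 hy1 hxj0 hy2 hij0 (Ne.symm hy3)
          hu0 (hunb i0) (hunb j0)
        refine ⟨p.reverse, hp.reverse, ?_⟩
        rw [Walk.length_reverse, SimpleGraph.dist_comm]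
        exact hlen
      · have hunb : ∀ w, u ≠ T.b w := fun w hw => hub ⟨w, hw⟩
        have hvnb : ∀ w, v ≠ T.b w := fun w hw => hvb ⟨w, hw⟩
        by_cases h1 : i1 = i0
        · rw [h1] at hv0 hij1
          have hj : j1 ≠ j0 := by
            intro h; rw [h] at hv0; exact hA i0 j0 hij0 hu0 hv0
          obtain ⟨y, hy1, hy2, hy3⟩ := fin4_fourth j0 i0 j1 (Ne.symm hij0) (Ne.symm hj) hij1
          exact caseAdj T j0 i0 j1 y (Ne.symm hij0) hy1 (Ne.symm hj) hy2 hij1 (Ne.symm hy3)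
            (T.mem_symm hu0) hv0 (hunb j0) (hunb i0) (hvnb i0) (hvnb j1)
        · by_cases h2 : i1 = j0
          · rw [h2] at hv0 hij1
            have hj : j1 ≠ i0 := by
              intro h; rw [h] at hv0
              exact hA i0 j0 hij0 hu0 (T.mem_symm hv0)
            obtain ⟨y, hy1, hy2, hy3⟩ := fin4_fourth i0 j0 j1 hij0 (Ne.symm hj) hij1
            exact caseAdj T i0 j0 j1 y hij0 hy1 (Ne.symm hj) hy2 hij1 (Ne.symm hy3)
              hu0 hv0 (hunb i0) (hunb j0) (hvnb j0) (hvnb j1)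
          · by_cases h3 : j1 = i0
            · rw [h3] at hv0 hij1
              obtain ⟨y, hy1, hy2, hy3⟩ := fin4_fourth j0 i0 i1 (Ne.symm hij0)
                (fun h => h2 h.symm) (fun h => h1 h.symm)
              exact caseAdj T j0 i0 i1 y (Ne.symm hij0) hy1 (fun h => h2 h.symm) hy2
                (fun h => h1 h.symm) (Ne.symm hy3)
                (T.mem_symm hu0) (T.mem_symm hv0) (hunb j0) (hunb i0) (hvnb i0) (hvnb i1)
            · by_cases h4 : j1 = j0
              · rw [h4] at hv0 hij1
                obtain ⟨y, hy1, hy2, hy3⟩ := fin4_fourth i0 j0 i1 hij0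
                  (fun h => h1 h.symm) (fun h => h2 h.symm)
                exact caseAdj T i0 j0 i1 y hij0 hy1 (fun h => h1 h.symm) hy2
                  (fun h => h2 h.symm) (Ne.symm hy3)
                  hu0 (T.mem_symm hv0) (hunb i0) (hunb j0) (hvnb j0) (hvnb i1)
              · exact caseOpp T i0 j0 i1 j1 hij0 (fun h => h1 h.symm) (fun h => h3 h.symm)
                  (fun h => h2 h.symm) (fun h => h4 h.symm) hij1
                  hu0 hv0 (hunb i0) (hunb j0) (hvnb i1) (hvnb j1)
end

section
/- Let G be a simple graph, s, t ∈ V(G), k ∈ ℕ, and suppose the (s,t)-relevant part of G contains a subdivided tetrahedron F(k) as a subgraph. Then G contains an (s,t)-path of length at least d_G(s,t) + k. -/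
open SimpleGraph Walk

namespace StmtInfra

variable {V : Type*} {G : SimpleGraph V}

/-- In an appended path, a common vertex of the two pieces is the junction. -/
lemma inter_eq_mid {u v w : V} {p : G.Walk u v} {q : G.Walk v w}
    (h : (p.append q).IsPath) {z : V} (hzp : z ∈ p.support) (hzq : z ∈ q.support) : z = v := by
  rw [Walk.isPath_def, Walk.support_append] at h
  have hd := List.disjoint_of_nodup_append h
  rw [Walk.support_eq_cons q] at hzq
  rcases List.mem_cons.mp hzq with rfl | hzq
  · rfl
  · exact absurd hzq (hd hzp)

lemma append_path {u v w : V} {p : G.Walk u v} {q : G.Walk v w}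
    (hp : p.IsPath) (hq : q.IsPath)
    (h : ∀ z, z ∈ p.support → z ∈ q.support → z = v) : (p.append q).IsPath := by
  rw [Walk.isPath_def, Walk.support_append]
  refine List.Nodup.append hp.support_nodup (hq.support_nodup.tail) ?_
  intro z hzp hzq
  have hz := h z hzp (List.mem_of_mem_tail hzq)
  subst hz
  have : z ∉ q.support.tail := by
    have := hq.support_nodup
    rw [Walk.support_eq_cons q] at this
    exact (List.nodup_cons.mp this).1
  exact this hzq

lemma chain3 {a b c d : V} {p : G.Walk a b} {q : G.Walk b c} {r : G.Walk c d}
    (hp : p.IsPath) (hq : q.IsPath) (hr : r.IsPath)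
    (hpq : ∀ z, z ∈ p.support → z ∈ q.support → z = b)
    (hqr : ∀ z, z ∈ q.support → z ∈ r.support → z = c)
    (hpr : ∀ z, z ∈ p.support → z ∈ r.support → False) :
    (p.append (q.append r)).IsPath := by
  refine append_path hp (append_path hq hr hqr) ?_
  intro z hzp hz
  rcases (Walk.mem_support_append_iff _ _).mp hz with h' | h'
  · exact hpq z hzp h'
  · exact absurd (hpr z hzp h') (by simp)

lemma chain4 {a b c d e : V} {p : G.Walk a b} {q : G.Walk b c} {r : G.Walk c d} {s : G.Walk d e}
    (hp : p.IsPath) (hq : q.IsPath) (hr : r.IsPath) (hs : s.IsPath)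
    (hpq : ∀ z, z ∈ p.support → z ∈ q.support → z = b)
    (hqr : ∀ z, z ∈ q.support → z ∈ r.support → z = c)
    (hrs : ∀ z, z ∈ r.support → z ∈ s.support → z = d)
    (hpr : ∀ z, z ∈ p.support → z ∈ r.support → False)
    (hps : ∀ z, z ∈ p.support → z ∈ s.support → False)
    (hqs : ∀ z, z ∈ q.support → z ∈ s.support → False) :
    (p.append (q.append (r.append s))).IsPath := by
  refine append_path hp (chain3 hq hr hs hqr hrs hqs) ?_
  intro z hzp hz
  rcases (Walk.mem_support_append_iff _ _).mp hz with h' | h'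
  · exact hpq z hzp h'
  rcases (Walk.mem_support_append_iff _ _).mp h' with h'' | h''
  · exact absurd (hpr z hzp h'') (by simp)
  · exact absurd (hps z hzp h'') (by simp)

lemma chain5 {a b c d e f : V} {p : G.Walk a b} {q : G.Walk b c} {r : G.Walk c d}
    {s : G.Walk d e} {w : G.Walk e f}
    (hp : p.IsPath) (hq : q.IsPath) (hr : r.IsPath) (hs : s.IsPath) (hw : w.IsPath)
    (hpq : ∀ z, z ∈ p.support → z ∈ q.support → z = b)
    (hqr : ∀ z, z ∈ q.support → z ∈ r.support → z = c)
    (hrs : ∀ z, z ∈ r.support → z ∈ s.support → z = d)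
    (hsw : ∀ z, z ∈ s.support → z ∈ w.support → z = e)
    (hpr : ∀ z, z ∈ p.support → z ∈ r.support → False)
    (hps : ∀ z, z ∈ p.support → z ∈ s.support → False)
    (hpw : ∀ z, z ∈ p.support → z ∈ w.support → False)
    (hqs : ∀ z, z ∈ q.support → z ∈ s.support → False)
    (hqw : ∀ z, z ∈ q.support → z ∈ w.support → False)
    (hrw : ∀ z, z ∈ r.support → z ∈ w.support → False) :
    (p.append (q.append (r.append (s.append w)))).IsPath := by
  refine append_path hp (chain4 hq hr hs hw hqr hrs hsw hqs hqw hrw) ?_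
  intro z hzp hz
  rcases (Walk.mem_support_append_iff _ _).mp hz with h' | h'
  · exact hpq z hzp h'
  rcases (Walk.mem_support_append_iff _ _).mp h' with h'' | h''
  · exact absurd (hpr z hzp h'') (by simp)
  rcases (Walk.mem_support_append_iff _ _).mp h'' with h3 | h3
  · exact absurd (hps z hzp h3) (by simp)
  · exact absurd (hpw z hzp h3) (by simp)

/-- First vertex of a walk lying in a set, as a decomposition. -/
lemma first_in_set {u w : V} (p : G.Walk u w) (S : Set V) (h : ∃ z ∈ p.support, z ∈ S) :
    ∃ x, x ∈ S ∧ ∃ (r : G.Walk u x) (r' : G.Walk x w), r.append r' = p ∧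
      ∀ z ∈ r.support, z ∈ S → z = x := by
  induction p with
  | nil =>
    obtain ⟨z, hz, hzS⟩ := h
    simp only [Walk.support_nil, List.mem_singleton] at hz
    subst hz
    exact ⟨z, hzS, Walk.nil, Walk.nil, rfl, by simp⟩
  | @cons a b w hadj q ih =>
    by_cases ha : a ∈ S
    · exact ⟨a, ha, Walk.nil, Walk.cons hadj q, rfl, by simp⟩
    · have h' : ∃ z ∈ q.support, z ∈ S := by
        obtain ⟨z, hz, hzS⟩ := h
        rw [Walk.support_cons] at hz
        rcases List.mem_cons.mp hz with rfl | hz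
        · exact absurd hzS ha
        · exact ⟨z, hz, hzS⟩
      obtain ⟨x, hxS, r, r', hr, hclean⟩ := ih h'
      refine ⟨x, hxS, Walk.cons hadj r, r', by rw [Walk.cons_append, hr], ?_⟩
      intro z hz hzS
      rw [Walk.support_cons] at hz
      rcases List.mem_cons.mp hz with rfl | hz
      · exact absurd hzS ha
      · exact hclean z hz hzS


lemma loop_eq {u : V} {p : G.Walk u u} (hp : p.IsPath) {z : V} (hz : z ∈ p.support) : z = u := by
  rw [(Walk.isPath_iff_eq_nil (p := p)).mp hp] at hz
  simpa using hz

lemma end_not_mem_left {u v w : V} {p : G.Walk u v} {q : G.Walk v w}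
    (h : (p.append q).IsPath) (hne : v ≠ w) : w ∉ p.support :=
  fun hm => hne (inter_eq_mid h hm (Walk.end_mem_support q)).symm

lemma start_not_mem_right {u v w : V} {p : G.Walk u v} {q : G.Walk v w}
    (h : (p.append q).IsPath) (hne : u ≠ v) : u ∉ q.support :=
  fun hm => hne (inter_eq_mid h (Walk.start_mem_support p) hm)

end StmtInfra


namespace SubdivTetra

variable {V : Type*} {M : SimpleGraph V} {k : ℕ} (T : SubdivTetra M k)

lemma bne_s11 {a c : Fin 4} (h : a ≠ c) : T.b a ≠ T.b c := fun hc => h (T.binj hc)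

lemma mem_supp_of {i j : Fin 4} (hij : i ≠ j) {z : V} (h : z ∈ (T.P i j).support) :
    z ∈ T.supp := ⟨i, j, hij, h⟩

lemma len_symm_s11 (i j : Fin 4) : (T.P j i).length = (T.P i j).length := by
  rw [T.Psymm]; exact Walk.length_reverse _

lemma cross {i j i' j' : Fin 4} (hij : i ≠ j) (hij' : i' ≠ j')
    (h1 : ¬(i = i' ∧ j = j')) (h2 : ¬(i = j' ∧ j = i')) {z : V}
    (hz : z ∈ (T.P i j).support) (hz' : z ∈ (T.P i' j').support) :
    (z = T.b i ∨ z = T.b j) ∧ (z = T.b i' ∨ z = T.b j') := by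
  refine T.Pdisj i j i' j' hij hij' ?_ z hz hz'
  intro hEq
  rcases Set.pair_eq_pair_iff.mp hEq with ⟨ha, hb⟩ | ⟨ha, hb⟩
  · exact h1 ⟨ha, hb⟩
  · exact h2 ⟨ha, hb⟩

/-- Two branch paths with fully distinct index pairs are disjoint. -/
lemma disj4 {i j i' j' : Fin 4} (hij : i ≠ j) (hij' : i' ≠ j')
    (h1 : i ≠ i') (h2 : i ≠ j') (h3 : j ≠ i') (h4 : j ≠ j') {z : V}
    (hz : z ∈ (T.P i j).support) (hz' : z ∈ (T.P i' j').support) : False := by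
  obtain ⟨ha, hb⟩ := T.cross hij hij' (fun h => h1 h.1) (fun h => h2 h.1) hz hz'
  rcases ha with rfl | rfl <;> rcases hb with hb | hb
  exacts [h1 (T.binj hb), h2 (T.binj hb), h3 (T.binj hb), h4 (T.binj hb)]

lemma branch_mem {a i j : Fin 4} (hij : i ≠ j) (h : T.b a ∈ (T.P i j).support) :
    a = i ∨ a = j := by
  by_contra hc
  push_neg at hc
  obtain ⟨hai, haj⟩ := hc
  obtain ⟨c, hca, hci, hcj⟩ : ∃ c, a ≠ c ∧ c ≠ i ∧ c ≠ j := by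
    have : ∀ a i j : Fin 4, ∃ c, a ≠ c ∧ c ≠ i ∧ c ≠ j := by decide
    exact this a i j
  have := (T.cross hca hij (fun h => hai h.1) (fun h => haj h.1)
    (Walk.start_mem_support _) h).2
  rcases this with hb | hb
  exacts [hai (T.binj hb), haj (T.binj hb)]

lemma exists_two (i j : Fin 4) (hij : i ≠ j) :
    ∃ c d : Fin 4, c ≠ d ∧ c ≠ i ∧ c ≠ j ∧ d ≠ i ∧ d ≠ j := by
  revert hij
  revert i j
  decide



lemma glue {x a c y : V} (π : M.Walk x a) (Ds Dl : M.Walk a c) (ρ : M.Walk c y)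
    (hπ : π.IsPath) (hD : Dl.IsPath) (hρ : ρ.IsPath)
    (hπD : ∀ z, z ∈ π.support → z ∈ Dl.support → z = a)
    (hDρ : ∀ z, z ∈ Dl.support → z ∈ ρ.support → z = c)
    (hπρ : ∀ z, z ∈ π.support → z ∈ ρ.support → False)
    (h1 : ∀ z ∈ π.support, z ∈ T.supp) (h2 : ∀ z ∈ Dl.support, z ∈ T.supp)
    (h3 : ∀ z ∈ ρ.support, z ∈ T.supp)
    (hlen : Ds.length + k ≤ Dl.length) :
    ∃ Qs Ql : M.Walk x y, Ql.IsPath ∧ (∀ v ∈ Ql.support, v ∈ T.supp) ∧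
      Qs.length + k ≤ Ql.length := by
  refine ⟨π.append (Ds.append ρ), π.append (Dl.append ρ),
    StmtInfra.chain3 hπ hD hρ hπD hDρ hπρ, ?_, ?_⟩
  · intro v hv
    rcases (Walk.mem_support_append_iff _ _).mp hv with h | h
    · exact h1 v h
    rcases (Walk.mem_support_append_iff _ _).mp h with h | h
    · exact h2 v h
    · exact h3 v h
  · simp only [Walk.length_append]
    omega

lemma case1half {i j c d : Fin 4} (hij : i ≠ j) (hcd : c ≠ d) (hci : c ≠ i) (hcj : c ≠ j)
    (hdi : d ≠ i) (hdj : d ≠ j) {x y : V}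
    (σ0 : M.Walk (T.b i) x) (μ : M.Walk x y) (σ1 : M.Walk y (T.b j))
    (hsplit : σ0.append (μ.append σ1) = T.P i j) (hxy : x ≠ y)
    (hA : (T.P i d).length + (k + 1) ≤ (T.P i c).length + (T.P c d).length) :
    ∃ Qs Ql : M.Walk x y, Ql.IsPath ∧ (∀ v ∈ Ql.support, v ∈ T.supp) ∧
      Qs.length + k ≤ Ql.length := by
  have hPij : (σ0.append (μ.append σ1)).IsPath := by rw [hsplit]; exact T.Ppath i j hij
  have hσ0 : σ0.IsPath := hPij.of_append_left
  have hμσ1 : (μ.append σ1).IsPath := hPij.of_append_right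
  have hσ1 : σ1.IsPath := hμσ1.of_append_right
  have hPij' : ((σ0.append μ).append σ1).IsPath := by
    rw [Walk.append_assoc] at hPij; exact hPij
  have subσ0 : ∀ z ∈ σ0.support, z ∈ (T.P i j).support := by
    intro z hz; rw [← hsplit, Walk.mem_support_append_iff]; exact Or.inl hz
  have subσ1 : ∀ z ∈ σ1.support, z ∈ (T.P i j).support := by
    intro z hz
    rw [← hsplit, Walk.mem_support_append_iff, Walk.mem_support_append_iff]
    exact Or.inr (Or.inr hz)
  have hxbj : x ≠ T.b j := by
    intro h; subst h
    exact hxy (StmtInfra.loop_eq hμσ1 (by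
      rw [Walk.mem_support_append_iff]; exact Or.inr (Walk.start_mem_support σ1))).symm
  have hybi : y ≠ T.b i := by
    intro h; subst h
    exact hxy (StmtInfra.loop_eq hPij'.of_append_left (by
      rw [Walk.mem_support_append_iff]; exact Or.inr (Walk.start_mem_support μ)))
  have hbjσ0 : T.b j ∉ σ0.support := StmtInfra.end_not_mem_left hPij hxbj
  have hbiσ1 : T.b i ∉ σ1.support :=
    StmtInfra.start_not_mem_right hPij' (fun h => hybi h.symm)
  have hσ0σ1 : ∀ z, z ∈ σ0.support → z ∈ σ1.support → False := by
    intro z h0 h1'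
    have hz : z = x := StmtInfra.inter_eq_mid hPij h0 (by
      rw [Walk.mem_support_append_iff]; exact Or.inr h1')
    subst hz
    exact hxy (StmtInfra.inter_eq_mid hμσ1 (Walk.start_mem_support μ) h1')
  -- the two connecting walks
  have hDl : ((T.P i c).append (T.P c d)).IsPath := by
    refine StmtInfra.append_path (T.Ppath i c (Ne.symm hci)) (T.Ppath c d hcd) ?_
    intro z h1 h2
    obtain ⟨ha, hb⟩ := T.cross (Ne.symm hci) hcd (fun h => hci h.1.symm)
      (fun h => hdi h.1.symm) h1 h2
    rcases ha with rfl | rfl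
    · rcases hb with hb | hb
      · exact absurd (T.binj hb) (Ne.symm hci)
      · exact absurd (T.binj hb) (Ne.symm hdi)
    · rfl
  have hρ : ((T.P d j).append σ1.reverse).IsPath := by
    refine StmtInfra.append_path (T.Ppath d j hdj) hσ1.reverse ?_
    intro z h1 h2
    rw [Walk.support_reverse, List.mem_reverse] at h2
    obtain ⟨ha, hb⟩ := T.cross hdj hij (fun h => hdi h.1) (fun h => hdj h.1)
      h1 (subσ1 _ h2)
    rcases ha with rfl | rfl
    · rcases hb with hb | hb
      · exact absurd (T.binj hb) hdi
      · exact absurd (T.binj hb) hdj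
    · rfl
  refine T.glue σ0.reverse (T.P i d) ((T.P i c).append (T.P c d))
    ((T.P d j).append σ1.reverse) hσ0.reverse hDl hρ ?_ ?_ ?_ ?_ ?_ ?_ ?_
  · -- π ∩ Dl → b i
    intro z h0 hD'
    rw [Walk.support_reverse, List.mem_reverse] at h0
    have h0' := subσ0 _ h0
    rcases (Walk.mem_support_append_iff _ _).mp hD' with h | h
    · obtain ⟨ha, hb⟩ := T.cross hij (Ne.symm hci) (fun hh => hcj hh.2.symm)
        (fun hh => hci hh.1.symm) h0' h
      rcases ha with rfl | rfl
      · rfl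
      · exact absurd h0 hbjσ0
    · exact (T.disj4 hij hcd (Ne.symm hci) (Ne.symm hdi) (Ne.symm hcj) (Ne.symm hdj)
        h0' h).elim
  · -- Dl ∩ ρ → b d
    intro z hD' hρ'
    rcases (Walk.mem_support_append_iff _ _).mp hD' with h | h <;>
      rcases (Walk.mem_support_append_iff _ _).mp hρ' with h' | h'
    · exact (T.disj4 (Ne.symm hci) hdj (Ne.symm hdi) hij hcd hcj h h').elim
    · rw [Walk.support_reverse, List.mem_reverse] at h'
      obtain ⟨ha, hb⟩ := T.cross (Ne.symm hci) hij (fun hh => hcj hh.2)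
        (fun hh => hij hh.1) h (subσ1 _ h')
      rcases ha with rfl | rfl
      · exact absurd h' hbiσ1
      · rcases hb with hb | hb
        · exact absurd (T.binj hb) hci
        · exact absurd (T.binj hb) hcj
    · obtain ⟨ha, hb⟩ := T.cross hcd hdj (fun hh => hcd hh.1) (fun hh => hcj hh.1) h h'
      rcases ha with rfl | rfl
      · rcases hb with hb | hb
        · exact absurd (T.binj hb) hcd
        · exact absurd (T.binj hb) hcj
      · rfl
    · exact (T.disj4 hcd hij hci hcj hdi hdj h (subσ1 _ (by
        rw [Walk.support_reverse, List.mem_reverse] at h'; exact h'))).elim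
  · -- π ∩ ρ → False
    intro z h0 hρ'
    rw [Walk.support_reverse, List.mem_reverse] at h0
    have h0' := subσ0 _ h0
    rcases (Walk.mem_support_append_iff _ _).mp hρ' with h | h
    · obtain ⟨ha, hb⟩ := T.cross hij hdj (fun hh => hdi hh.1.symm)
        (fun hh => hij hh.1) h0' h
      rcases ha with rfl | rfl
      · rcases hb with hb | hb
        · exact absurd (T.binj hb) (Ne.symm hdi)
        · exact absurd (T.binj hb) hij
      · exact absurd h0 hbjσ0
    · rw [Walk.support_reverse, List.mem_reverse] at h
      exact hσ0σ1 z h0 h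
  · intro z hz
    rw [Walk.support_reverse, List.mem_reverse] at hz
    exact T.mem_supp_of hij (subσ0 _ hz)
  · intro z hz
    rcases (Walk.mem_support_append_iff _ _).mp hz with h | h
    · exact T.mem_supp_of (Ne.symm hci) h
    · exact T.mem_supp_of hcd h
  · intro z hz
    rcases (Walk.mem_support_append_iff _ _).mp hz with h | h
    · exact T.mem_supp_of hdj h
    · rw [Walk.support_reverse, List.mem_reverse] at h
      exact T.mem_supp_of hij (subσ1 _ h)
  · rw [Walk.length_append]
    omega

lemma case1core {i j : Fin 4} (hij : i ≠ j) {x y : V}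
    (σ0 : M.Walk (T.b i) x) (μ : M.Walk x y) (σ1 : M.Walk y (T.b j))
    (hsplit : σ0.append (μ.append σ1) = T.P i j) (hxy : x ≠ y) :
    ∃ Qs Ql : M.Walk x y, Ql.IsPath ∧ (∀ v ∈ Ql.support, v ∈ T.supp) ∧
      Qs.length + k ≤ Ql.length := by
  obtain ⟨c, d, hcd, hci, hcj, hdi, hdj⟩ := SubdivTetra.exists_two i j hij
  by_cases hA : (T.P i d).length + (k + 1) ≤ (T.P i c).length + (T.P c d).length
  · exact T.case1half hij hcd hci hcj hdi hdj σ0 μ σ1 hsplit hxy hA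
  · push_neg at hA
    have h1 := T.Plen c d hcd
    have h2 := T.len_symm_s11 c d
    exact T.case1half hij hcd.symm hdi hdj hci hcj σ0 μ σ1 hsplit hxy (by omega)

lemma case2core {i j l m : Fin 4} (hij : i ≠ j) (hil : i ≠ l) (him : i ≠ m)
    (hjl : j ≠ l) (hjm : j ≠ m) (hlm : l ≠ m) {x y : V}
    (σ0 : M.Walk (T.b i) x) (σ1 : M.Walk x (T.b j))
    (hsx : σ0.append σ1 = T.P i j)
    (t0 : M.Walk (T.b j) y) (t1 : M.Walk y (T.b l))
    (hsy : t0.append t1 = T.P j l)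
    (hxb : ∀ a, x ≠ T.b a) (hyb : ∀ a, y ≠ T.b a) :
    ∃ Qs Ql : M.Walk x y, Ql.IsPath ∧ (∀ v ∈ Ql.support, v ∈ T.supp) ∧
      Qs.length + k ≤ Ql.length := by
  have hPij : (σ0.append σ1).IsPath := by rw [hsx]; exact T.Ppath i j hij
  have hPjl : (t0.append t1).IsPath := by rw [hsy]; exact T.Ppath j l hjl
  have hσ0 : σ0.IsPath := hPij.of_append_left
  have hσ1 : σ1.IsPath := hPij.of_append_right
  have ht0 : t0.IsPath := hPjl.of_append_left
  have ht1 : t1.IsPath := hPjl.of_append_right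
  have subσ0 : ∀ z ∈ σ0.support, z ∈ (T.P i j).support := by
    intro z hz; rw [← hsx, Walk.mem_support_append_iff]; exact Or.inl hz
  have subσ1 : ∀ z ∈ σ1.support, z ∈ (T.P i j).support := by
    intro z hz; rw [← hsx, Walk.mem_support_append_iff]; exact Or.inr hz
  have subt1 : ∀ z ∈ t1.support, z ∈ (T.P j l).support := by
    intro z hz; rw [← hsy, Walk.mem_support_append_iff]; exact Or.inr hz
  have hbjσ0 : T.b j ∉ σ0.support := StmtInfra.end_not_mem_left hPij (hxb j)
  have hbiσ1 : T.b i ∉ σ1.support :=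
    StmtInfra.start_not_mem_right hPij (fun h => hxb i h.symm)
  have hbjt1 : T.b j ∉ t1.support :=
    StmtInfra.start_not_mem_right hPjl (fun h => hyb j h.symm)
  by_cases hA : (T.P i l).length + (k + 1) ≤ (T.P i m).length + (T.P m l).length
  · -- x → b i → b m → b l → y  versus  x → b i → b l → y
    have hDl : ((T.P i m).append (T.P m l)).IsPath := by
      refine StmtInfra.append_path (T.Ppath i m him) (T.Ppath m l (Ne.symm hlm)) ?_
      intro z h1 h2
      obtain ⟨ha, hb⟩ := T.cross him (Ne.symm hlm) (fun hh => him hh.1) (fun hh => hil hh.1) h1 h2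
      rcases ha with rfl | rfl
      · rcases hb with hb | hb
        · exact absurd (T.binj hb) him
        · exact absurd (T.binj hb) hil
      · rfl
    refine T.glue σ0.reverse (T.P i l) ((T.P i m).append (T.P m l)) t1.reverse
      hσ0.reverse hDl ht1.reverse ?_ ?_ ?_ ?_ ?_ ?_ ?_
    · intro z h0 hD'
      rw [Walk.support_reverse, List.mem_reverse] at h0
      have h0' := subσ0 _ h0
      rcases (Walk.mem_support_append_iff _ _).mp hD' with h | h
      · obtain ⟨ha, hb⟩ := T.cross hij him (fun hh => hjm hh.2) (fun hh => him hh.1) h0' h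
        rcases ha with rfl | rfl
        · rfl
        · exact absurd h0 hbjσ0
      · exact (T.disj4 hij (Ne.symm hlm) him hil hjm hjl h0' h).elim
    · intro z hD' hρ'
      rw [Walk.support_reverse, List.mem_reverse] at hρ'
      have hρ'' := subt1 _ hρ'
      rcases (Walk.mem_support_append_iff _ _).mp hD' with h | h
      · exact (T.disj4 him hjl hij hil (Ne.symm hjm) (Ne.symm hlm) h hρ'').elim
      · obtain ⟨ha, hb⟩ := T.cross (Ne.symm hlm) hjl (fun hh => hjm hh.1.symm)
          (fun hh => hlm hh.1.symm) h hρ''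
        rcases ha with rfl | rfl
        · rcases hb with hb | hb
          · exact absurd (T.binj hb) (Ne.symm hjm)
          · exact absurd (T.binj hb) (Ne.symm hlm)
        · rfl
    · intro z h0 hρ'
      rw [Walk.support_reverse, List.mem_reverse] at h0
      rw [Walk.support_reverse, List.mem_reverse] at hρ'
      obtain ⟨ha, hb⟩ := T.cross hij hjl (fun hh => hij hh.1) (fun hh => hil hh.1)
        (subσ0 _ h0) (subt1 _ hρ')
      rcases ha with rfl | rfl
      · rcases hb with hb | hb
        · exact absurd (T.binj hb) hij
        · exact absurd (T.binj hb) hil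
      · exact absurd h0 hbjσ0
    · intro z hz
      rw [Walk.support_reverse, List.mem_reverse] at hz
      exact T.mem_supp_of hij (subσ0 _ hz)
    · intro z hz
      rcases (Walk.mem_support_append_iff _ _).mp hz with h | h
      · exact T.mem_supp_of him h
      · exact T.mem_supp_of (Ne.symm hlm) h
    · intro z hz
      rw [Walk.support_reverse, List.mem_reverse] at hz
      exact T.mem_supp_of hjl (subt1 _ hz)
    · rw [Walk.length_append]
      omega
  · -- x → b j → b m → b i → b l → y  versus  x → b j → b m → b l → y
    push_neg at hA
    have hπ : (σ1.append (T.P j m)).IsPath := by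
      refine StmtInfra.append_path hσ1 (T.Ppath j m hjm) ?_
      intro z h1 h2
      obtain ⟨ha, hb⟩ := T.cross hij hjm (fun hh => hij hh.1) (fun hh => him hh.1)
        (subσ1 _ h1) h2
      rcases ha with rfl | rfl
      · exact absurd h1 hbiσ1
      · rfl
    have hDl : ((T.P m i).append (T.P i l)).IsPath := by
      refine StmtInfra.append_path (T.Ppath m i (Ne.symm him)) (T.Ppath i l hil) ?_
      intro z h1 h2
      obtain ⟨ha, hb⟩ := T.cross (Ne.symm him) hil (fun hh => him hh.1.symm)
        (fun hh => hlm hh.1.symm) h1 h2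
      rcases ha with rfl | rfl
      · rcases hb with hb | hb
        · exact absurd (T.binj hb) (Ne.symm him)
        · exact absurd (T.binj hb) (Ne.symm hlm)
      · rfl
    refine T.glue (σ1.append (T.P j m)) (T.P m l) ((T.P m i).append (T.P i l)) t1.reverse
      hπ hDl ht1.reverse ?_ ?_ ?_ ?_ ?_ ?_ ?_
    · intro z h0 hD'
      rcases (Walk.mem_support_append_iff _ _).mp h0 with h | h <;>
        rcases (Walk.mem_support_append_iff _ _).mp hD' with h' | h'
      · obtain ⟨ha, hb⟩ := T.cross hij (Ne.symm him) (fun hh => him hh.1)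
          (fun hh => hjm hh.2) (subσ1 _ h) h'
        rcases ha with rfl | rfl
        · exact absurd h hbiσ1
        · rcases hb with hb | hb
          · exact absurd (T.binj hb) hjm
          · exact absurd (T.binj hb) (Ne.symm hij)
      · obtain ⟨ha, hb⟩ := T.cross hij hil (fun hh => hjl hh.2)
          (fun hh => hil hh.1) (subσ1 _ h) h'
        rcases ha with rfl | rfl
        · exact absurd h hbiσ1
        · rcases hb with hb | hb
          · exact absurd (T.binj hb) (Ne.symm hij)
          · exact absurd (T.binj hb) hjl
      · obtain ⟨ha, hb⟩ := T.cross hjm (Ne.symm him) (fun hh => hjm hh.1)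
          (fun hh => hij hh.1.symm) h h'
        rcases ha with rfl | rfl
        · rcases hb with hb | hb
          · exact absurd (T.binj hb) hjm
          · exact absurd (T.binj hb) (Ne.symm hij)
        · rfl
      · exact (T.disj4 hjm hil (Ne.symm hij) hjl (Ne.symm him) (Ne.symm hlm) h h').elim
    · intro z hD' hρ'
      rw [Walk.support_reverse, List.mem_reverse] at hρ'
      have hρ'' := subt1 _ hρ'
      rcases (Walk.mem_support_append_iff _ _).mp hD' with h | h
      · exact (T.disj4 (Ne.symm him) hjl (Ne.symm hjm) (Ne.symm hlm) hij hil h hρ'').elim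
      · obtain ⟨ha, hb⟩ := T.cross hil hjl (fun hh => hij hh.1) (fun hh => hil hh.1) h hρ''
        rcases ha with rfl | rfl
        · rcases hb with hb | hb
          · exact absurd (T.binj hb) hij
          · exact absurd (T.binj hb) hil
        · rfl
    · intro z h0 hρ'
      rw [Walk.support_reverse, List.mem_reverse] at hρ'
      have hρ'' := subt1 _ hρ'
      rcases (Walk.mem_support_append_iff _ _).mp h0 with h | h
      · obtain ⟨ha, hb⟩ := T.cross hij hjl (fun hh => hij hh.1) (fun hh => hil hh.1)
          (subσ1 _ h) hρ''
        rcases ha with rfl | rfl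
        · exact absurd h hbiσ1
        · exact absurd hρ' hbjt1
      · obtain ⟨ha, hb⟩ := T.cross hjm hjl (fun hh => hlm hh.2.symm)
          (fun hh => hjl hh.1) h hρ''
        rcases ha with rfl | rfl
        · exact absurd hρ' hbjt1
        · rcases hb with hb | hb
          · exact absurd (T.binj hb) (Ne.symm hjm)
          · exact absurd (T.binj hb) (Ne.symm hlm)
    · intro z hz
      rcases (Walk.mem_support_append_iff _ _).mp hz with h | h
      · exact T.mem_supp_of hij (subσ1 _ h)
      · exact T.mem_supp_of hjm h
    · intro z hz
      rcases (Walk.mem_support_append_iff _ _).mp hz with h | h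
      · exact T.mem_supp_of (Ne.symm him) h
      · exact T.mem_supp_of hil h
    · intro z hz
      rw [Walk.support_reverse, List.mem_reverse] at hz
      exact T.mem_supp_of hjl (subt1 _ hz)
    · rw [Walk.length_append]
      have h1 := T.Plen i m him
      have h2 := T.len_symm_s11 m i
      have h3 := T.len_symm_s11 i m
      omega


lemma case2bcore {i j l m : Fin 4} (hij : i ≠ j) (hil : i ≠ l) (him : i ≠ m)
    (hjl : j ≠ l) (hjm : j ≠ m) (hlm : l ≠ m) {y : V}
    (t0 : M.Walk (T.b j) y) (t1 : M.Walk y (T.b l))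
    (hsy : t0.append t1 = T.P j l) (hyb : ∀ a, y ≠ T.b a) :
    ∃ Qs Ql : M.Walk (T.b i) y, Ql.IsPath ∧ (∀ v ∈ Ql.support, v ∈ T.supp) ∧
      Qs.length + k ≤ Ql.length := by
  have hPjl : (t0.append t1).IsPath := by rw [hsy]; exact T.Ppath j l hjl
  have ht0 : t0.IsPath := hPjl.of_append_left
  have ht1 : t1.IsPath := hPjl.of_append_right
  have subt0 : ∀ z ∈ t0.support, z ∈ (T.P j l).support := by
    intro z hz; rw [← hsy, Walk.mem_support_append_iff]; exact Or.inl hz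
  have subt1 : ∀ z ∈ t1.support, z ∈ (T.P j l).support := by
    intro z hz; rw [← hsy, Walk.mem_support_append_iff]; exact Or.inr hz
  have hblt0 : T.b l ∉ t0.support := StmtInfra.end_not_mem_left hPjl (hyb l)
  have hbjt1 : T.b j ∉ t1.support :=
    StmtInfra.start_not_mem_right hPjl (fun h => hyb j h.symm)
  have hπtriv : ∀ z ∈ (Walk.nil : M.Walk (T.b i) (T.b i)).support, z = T.b i := by
    intro z hz; simpa using hz
  by_cases hA : (T.P i j).length + (k + 1) ≤ (T.P i m).length + (T.P m j).length
  · -- b i → b m → b j → y  versus  b i → b j → y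
    have hDl : ((T.P i m).append (T.P m j)).IsPath := by
      refine StmtInfra.append_path (T.Ppath i m him) (T.Ppath m j (Ne.symm hjm)) ?_
      intro z h1 h2
      obtain ⟨ha, hb⟩ := T.cross him (Ne.symm hjm) (fun hh => him hh.1)
        (fun hh => hij hh.1) h1 h2
      rcases ha with rfl | rfl
      · rcases hb with hb | hb
        · exact absurd (T.binj hb) him
        · exact absurd (T.binj hb) hij
      · rfl
    refine T.glue Walk.nil (T.P i j) ((T.P i m).append (T.P m j)) t0
      (by simp) hDl ht0 ?_ ?_ ?_ ?_ ?_ ?_ ?_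
    · intro z hz _; exact hπtriv z hz
    · intro z hD' hρ'
      have hρ'' := subt0 _ hρ'
      rcases (Walk.mem_support_append_iff _ _).mp hD' with h | h
      · exact (T.disj4 him hjl hij hil (Ne.symm hjm) (Ne.symm hlm) h hρ'').elim
      · obtain ⟨ha, hb⟩ := T.cross (Ne.symm hjm) hjl (fun hh => hjm hh.1.symm)
          (fun hh => (Ne.symm hlm) hh.1) h hρ''
        rcases ha with rfl | rfl
        · rcases hb with hb | hb
          · exact absurd (T.binj hb) (Ne.symm hjm)
          · exact absurd (T.binj hb) (Ne.symm hlm)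
        · rfl
    · intro z hz hρ'
      have hz' := hπtriv z hz
      subst hz'
      rcases T.branch_mem hjl (subt0 _ hρ') with h | h
      · exact hij h
      · exact hil h
    · intro z hz; rw [hπtriv z hz]; exact T.mem_supp_of hij (Walk.start_mem_support _)
    · intro z hz
      rcases (Walk.mem_support_append_iff _ _).mp hz with h | h
      · exact T.mem_supp_of him h
      · exact T.mem_supp_of (Ne.symm hjm) h
    · intro z hz; exact T.mem_supp_of hjl (subt0 _ hz)
    · rw [Walk.length_append]
      omega
  · -- b i → b j → b m → b l → y  versus  b i → b m → b l → y
    push_neg at hA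
    have hDl : ((T.P i j).append (T.P j m)).IsPath := by
      refine StmtInfra.append_path (T.Ppath i j hij) (T.Ppath j m hjm) ?_
      intro z h1 h2
      obtain ⟨ha, hb⟩ := T.cross hij hjm (fun hh => hij hh.1) (fun hh => him hh.1) h1 h2
      rcases ha with rfl | rfl
      · rcases hb with hb | hb
        · exact absurd (T.binj hb) hij
        · exact absurd (T.binj hb) him
      · rfl
    have hρ : ((T.P m l).append t1.reverse).IsPath := by
      refine StmtInfra.append_path (T.Ppath m l (Ne.symm hlm)) ht1.reverse ?_
      intro z h1 h2
      rw [Walk.support_reverse, List.mem_reverse] at h2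
      obtain ⟨ha, hb⟩ := T.cross (Ne.symm hlm) hjl (fun hh => hjm hh.1.symm)
        (fun hh => hlm hh.1.symm) h1 (subt1 _ h2)
      rcases ha with rfl | rfl
      · rcases hb with hb | hb
        · exact absurd (T.binj hb) (Ne.symm hjm)
        · exact absurd (T.binj hb) (Ne.symm hlm)
      · rfl
    refine T.glue Walk.nil (T.P i m) ((T.P i j).append (T.P j m))
      ((T.P m l).append t1.reverse) (by simp) hDl hρ ?_ ?_ ?_ ?_ ?_ ?_ ?_
    · intro z hz _; exact hπtriv z hz
    · intro z hD' hρ'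
      rcases (Walk.mem_support_append_iff _ _).mp hD' with h | h <;>
        rcases (Walk.mem_support_append_iff _ _).mp hρ' with h' | h'
      · exact (T.disj4 hij (Ne.symm hlm) him hil hjm hjl h h').elim
      · rw [Walk.support_reverse, List.mem_reverse] at h'
        obtain ⟨ha, hb⟩ := T.cross hij hjl (fun hh => hij hh.1) (fun hh => hil hh.1)
          h (subt1 _ h')
        rcases ha with rfl | rfl
        · rcases hb with hb | hb
          · exact absurd (T.binj hb) hij
          · exact absurd (T.binj hb) hil
        · exact absurd h' hbjt1
      · obtain ⟨ha, hb⟩ := T.cross hjm (Ne.symm hlm) (fun hh => hjm hh.1)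
          (fun hh => hjl hh.1) h h'
        rcases ha with rfl | rfl
        · rcases hb with hb | hb
          · exact absurd (T.binj hb) hjm
          · exact absurd (T.binj hb) hjl
        · rfl
      · rw [Walk.support_reverse, List.mem_reverse] at h'
        obtain ⟨ha, hb⟩ := T.cross hjm hjl (fun hh => hlm hh.2.symm)
          (fun hh => hjl hh.1) h (subt1 _ h')
        rcases ha with rfl | rfl
        · exact absurd h' hbjt1
        · rcases hb with hb | hb
          · exact absurd (T.binj hb) (Ne.symm hjm)
          · exact absurd (T.binj hb) (Ne.symm hlm)
    · intro z hz hρ'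
      have hz' := hπtriv z hz
      subst hz'
      rcases (Walk.mem_support_append_iff _ _).mp hρ' with h | h
      · rcases T.branch_mem (Ne.symm hlm) h with h' | h'
        · exact him h'
        · exact hil h'
      · rw [Walk.support_reverse, List.mem_reverse] at h
        rcases T.branch_mem hjl (subt1 _ h) with h' | h'
        · exact hij h'
        · exact hil h'
    · intro z hz; rw [hπtriv z hz]; exact T.mem_supp_of hij (Walk.start_mem_support _)
    · intro z hz
      rcases (Walk.mem_support_append_iff _ _).mp hz with h | h
      · exact T.mem_supp_of hij h
      · exact T.mem_supp_of hjm h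
    · intro z hz
      rcases (Walk.mem_support_append_iff _ _).mp hz with h | h
      · exact T.mem_supp_of (Ne.symm hlm) h
      · rw [Walk.support_reverse, List.mem_reverse] at h
        exact T.mem_supp_of hjl (subt1 _ h)
    · rw [Walk.length_append]
      have h1 := T.Plen m j (Ne.symm hjm)
      have h2 := T.len_symm_s11 j m
      omega


lemma case3half {i j l m : Fin 4} (hij : i ≠ j) (hil : i ≠ l) (him : i ≠ m)
    (hjl : j ≠ l) (hjm : j ≠ m) (hlm : l ≠ m) {x y : V}
    (σ0 : M.Walk (T.b i) x) (σ1 : M.Walk x (T.b j))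
    (hsx : σ0.append σ1 = T.P i j)
    (t0 : M.Walk (T.b l) y) (t1 : M.Walk y (T.b m))
    (hsy : t0.append t1 = T.P l m)
    (hxb : ∀ a, x ≠ T.b a) (hyb : ∀ a, y ≠ T.b a)
    (hA : (T.P i l).length + (k + 1) ≤
      (T.P i m).length + (T.P m j).length + (T.P j l).length) :
    ∃ Qs Ql : M.Walk x y, Ql.IsPath ∧ (∀ v ∈ Ql.support, v ∈ T.supp) ∧
      Qs.length + k ≤ Ql.length := by
  have hPij : (σ0.append σ1).IsPath := by rw [hsx]; exact T.Ppath i j hij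
  have hPlm : (t0.append t1).IsPath := by rw [hsy]; exact T.Ppath l m hlm
  have hσ0 : σ0.IsPath := hPij.of_append_left
  have ht0 : t0.IsPath := hPlm.of_append_left
  have subσ0 : ∀ z ∈ σ0.support, z ∈ (T.P i j).support := by
    intro z hz; rw [← hsx, Walk.mem_support_append_iff]; exact Or.inl hz
  have subt0 : ∀ z ∈ t0.support, z ∈ (T.P l m).support := by
    intro z hz; rw [← hsy, Walk.mem_support_append_iff]; exact Or.inl hz
  have hbjσ0 : T.b j ∉ σ0.support := StmtInfra.end_not_mem_left hPij (hxb j)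
  have hbmt0 : T.b m ∉ t0.support := StmtInfra.end_not_mem_left hPlm (hyb m)
  -- long connector b i → b m → b j → b l, short connector b i → b l
  have hD23 : ((T.P m j).append (T.P j l)).IsPath := by
    refine StmtInfra.append_path (T.Ppath m j (Ne.symm hjm)) (T.Ppath j l hjl) ?_
    intro z h1 h2
    obtain ⟨ha, hb⟩ := T.cross (Ne.symm hjm) hjl (fun hh => hjm hh.1.symm)
      (fun hh => (Ne.symm hlm) hh.1) h1 h2
    rcases ha with rfl | rfl
    · rcases hb with hb | hb
      · exact absurd (T.binj hb) (Ne.symm hjm)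
      · exact absurd (T.binj hb) (Ne.symm hlm)
    · rfl
  have hDl : ((T.P i m).append ((T.P m j).append (T.P j l))).IsPath := by
    refine StmtInfra.append_path (T.Ppath i m him) hD23 ?_
    intro z h1 h2
    rcases (Walk.mem_support_append_iff _ _).mp h2 with h | h
    · obtain ⟨ha, hb⟩ := T.cross him (Ne.symm hjm) (fun hh => him hh.1)
        (fun hh => hij hh.1) h1 h
      rcases ha with rfl | rfl
      · rcases hb with hb | hb
        · exact absurd (T.binj hb) him
        · exact absurd (T.binj hb) hij
      · rfl
    · exact (T.disj4 him hjl hij hil (Ne.symm hjm) (Ne.symm hlm) h1 h).elim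
  refine T.glue σ0.reverse (T.P i l) ((T.P i m).append ((T.P m j).append (T.P j l))) t0
    hσ0.reverse hDl ht0 ?_ ?_ ?_ ?_ ?_ ?_ ?_
  · -- σ0ʳ ∩ Dl → b i
    intro z h0 hD'
    rw [Walk.support_reverse, List.mem_reverse] at h0
    have h0' := subσ0 _ h0
    rcases (Walk.mem_support_append_iff _ _).mp hD' with h | h
    · obtain ⟨ha, hb⟩ := T.cross hij him (fun hh => hjm hh.2) (fun hh => him hh.1) h0' h
      rcases ha with rfl | rfl
      · rfl
      · exact absurd h0 hbjσ0
    rcases (Walk.mem_support_append_iff _ _).mp h with h' | h'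
    · obtain ⟨ha, hb⟩ := T.cross hij (Ne.symm hjm) (fun hh => him hh.1)
        (fun hh => hij hh.1) h0' h'
      rcases ha with rfl | rfl
      · rcases hb with hb | hb
        · exact absurd (T.binj hb) him
        · exact absurd (T.binj hb) hij
      · exact absurd h0 hbjσ0
    · obtain ⟨ha, hb⟩ := T.cross hij hjl (fun hh => hij hh.1) (fun hh => hil hh.1) h0' h'
      rcases ha with rfl | rfl
      · rcases hb with hb | hb
        · exact absurd (T.binj hb) hij
        · exact absurd (T.binj hb) hil
      · exact absurd h0 hbjσ0
  · -- Dl ∩ t0 → b l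
    intro z hD' hρ'
    have hρ'' := subt0 _ hρ'
    rcases (Walk.mem_support_append_iff _ _).mp hD' with h | h
    · obtain ⟨ha, hb⟩ := T.cross him hlm (fun hh => hil hh.1) (fun hh => him hh.1) h hρ''
      rcases ha with rfl | rfl
      · rcases hb with hb | hb
        · exact absurd (T.binj hb) hil
        · exact absurd (T.binj hb) him
      · exact absurd hρ' hbmt0
    rcases (Walk.mem_support_append_iff _ _).mp h with h' | h'
    · obtain ⟨ha, hb⟩ := T.cross (Ne.symm hjm) hlm (fun hh => hjm hh.2)
        (fun hh => hjl hh.2) h' hρ''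
      rcases ha with rfl | rfl
      · exact absurd hρ' hbmt0
      · rcases hb with hb | hb
        · exact absurd (T.binj hb) hjl
        · exact absurd (T.binj hb) hjm
    · obtain ⟨ha, hb⟩ := T.cross hjl hlm (fun hh => hjl hh.1) (fun hh => hjm hh.1) h' hρ''
      rcases ha with rfl | rfl
      · rcases hb with hb | hb
        · exact absurd (T.binj hb) hjl
        · exact absurd (T.binj hb) hjm
      · rfl
  · -- σ0ʳ ∩ t0 → False
    intro z h0 hρ'
    rw [Walk.support_reverse, List.mem_reverse] at h0
    exact T.disj4 hij hlm hil him hjl hjm (subσ0 _ h0) (subt0 _ hρ')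
  · intro z hz
    rw [Walk.support_reverse, List.mem_reverse] at hz
    exact T.mem_supp_of hij (subσ0 _ hz)
  · intro z hz
    rcases (Walk.mem_support_append_iff _ _).mp hz with h | h
    · exact T.mem_supp_of him h
    rcases (Walk.mem_support_append_iff _ _).mp h with h' | h'
    · exact T.mem_supp_of (Ne.symm hjm) h'
    · exact T.mem_supp_of hjl h'
  · intro z hz; exact T.mem_supp_of hlm (subt0 _ hz)
  · simp only [Walk.length_append]
    omega

lemma case3core {i j l m : Fin 4} (hij : i ≠ j) (hil : i ≠ l) (him : i ≠ m)
    (hjl : j ≠ l) (hjm : j ≠ m) (hlm : l ≠ m) {x y : V}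
    (σ0 : M.Walk (T.b i) x) (σ1 : M.Walk x (T.b j))
    (hsx : σ0.append σ1 = T.P i j)
    (t0 : M.Walk (T.b l) y) (t1 : M.Walk y (T.b m))
    (hsy : t0.append t1 = T.P l m)
    (hxb : ∀ a, x ≠ T.b a) (hyb : ∀ a, y ≠ T.b a) :
    ∃ Qs Ql : M.Walk x y, Ql.IsPath ∧ (∀ v ∈ Ql.support, v ∈ T.supp) ∧
      Qs.length + k ≤ Ql.length := by
  by_cases hA : (T.P i l).length + (k + 1) ≤
      (T.P i m).length + (T.P m j).length + (T.P j l).length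
  · exact T.case3half hij hil him hjl hjm hlm σ0 σ1 hsx t0 t1 hsy hxb hyb hA
  · push_neg at hA
    have hsy' : (t1.reverse).append (t0.reverse) = T.P m l := by
      rw [← Walk.reverse_append, hsy, ← T.Psymm]
    have h1 := T.Plen m j (Ne.symm hjm)
    have h2 := T.Plen j l hjl
    have h3 := T.len_symm_s11 l j
    have h4 := T.len_symm_s11 m j
    have h5 := T.len_symm_s11 j m
    exact T.case3half hij him hil hjm hjl hlm.symm σ0 σ1 hsx t1.reverse t0.reverse hsy'
      hxb hyb (by omega)


lemma exists_fourth : ∀ a c e : Fin 4, a ≠ c → a ≠ e → c ≠ e → ∃ d, d ≠ a ∧ d ≠ c ∧ d ≠ e := by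
  decide

lemma mem_symmP {a c : Fin 4} {z : V} (h : z ∈ (T.P a c).support) : z ∈ (T.P c a).support := by
  rw [T.Psymm a c, Walk.support_reverse, List.mem_reverse]; exact h

lemma split_at {a c : Fin 4} {z : V} (h : z ∈ (T.P a c).support) :
    ∃ (σ : M.Walk (T.b a) z) (τ : M.Walk z (T.b c)), σ.append τ = T.P a c := by
  obtain ⟨q, r, hqr⟩ := (Walk.mem_support_iff_exists_append).mp h
  exact ⟨q, r, hqr.symm⟩

lemma lp_branch {a l m : Fin 4} {y : V} (hlm : l ≠ m) (hys : y ∈ (T.P l m).support)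
    (hal : a ≠ l) (ham : a ≠ m) (hyb : ∀ c, y ≠ T.b c) :
    ∃ Qs Ql : M.Walk (T.b a) y, Ql.IsPath ∧ (∀ v ∈ Ql.support, v ∈ T.supp) ∧
      Qs.length + k ≤ Ql.length := by
  obtain ⟨f, hfa, hfl, hfm⟩ := exists_fourth a l m hal ham hlm
  obtain ⟨t0, t1, hsy⟩ := T.split_at hys
  exact T.case2bcore hal ham (Ne.symm hfa) hlm (Ne.symm hfl) (Ne.symm hfm) t0 t1 hsy hyb

lemma longpath {x y : V} (hx : x ∈ T.supp) (hy : y ∈ T.supp) (hxy : x ≠ y) :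
    ∃ Qs Ql : M.Walk x y, Ql.IsPath ∧ (∀ v ∈ Ql.support, v ∈ T.supp) ∧
      Qs.length + k ≤ Ql.length := by
  by_cases hc : ∃ a c, a ≠ c ∧ x ∈ (T.P a c).support ∧ y ∈ (T.P a c).support
  · obtain ⟨a, c, hac, hxs, hys⟩ := hc
    obtain ⟨σ, τ, hστ⟩ := (Walk.mem_support_iff_exists_append).mp hxs
    have hy' : y ∈ σ.support ∨ y ∈ τ.support := by
      rw [← Walk.mem_support_append_iff, ← hστ]; exact hys
    rcases hy' with hy' | hy'
    · obtain ⟨α, β, hαβ⟩ := (Walk.mem_support_iff_exists_append).mp hy'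
      have hsplit : α.append (β.append τ) = T.P a c := by
        rw [Walk.append_assoc, ← hαβ, ← hστ]
      obtain ⟨Qs, Ql, h1, h2, h3⟩ := T.case1core hac α β τ hsplit hxy.symm
      refine ⟨Qs.reverse, Ql.reverse, h1.reverse, ?_, ?_⟩
      · intro v hv; rw [Walk.support_reverse, List.mem_reverse] at hv; exact h2 v hv
      · rw [Walk.length_reverse, Walk.length_reverse]; exact h3
    · obtain ⟨μ, σ1, hτ⟩ := (Walk.mem_support_iff_exists_append).mp hy'
      have hsplit : σ.append (μ.append σ1) = T.P a c := by rw [← hτ, ← hστ]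
      exact T.case1core hac σ μ σ1 hsplit hxy
  · by_cases hbx : ∃ a, x = T.b a
    · obtain ⟨a, rfl⟩ := hbx
      by_cases hby : ∃ c, y = T.b c
      · obtain ⟨c, rfl⟩ := hby
        have hac : a ≠ c := fun h => hxy (by rw [h])
        exact absurd ⟨a, c, hac, Walk.start_mem_support _, Walk.end_mem_support _⟩ hc
      · push_neg at hby
        obtain ⟨l, m, hlm, hys⟩ := hy
        have hal : a ≠ l := fun h =>
          hc ⟨l, m, hlm, by rw [h]; exact Walk.start_mem_support _, hys⟩
        have ham : a ≠ m := fun h =>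
          hc ⟨l, m, hlm, by rw [h]; exact Walk.end_mem_support _, hys⟩
        exact T.lp_branch hlm hys hal ham hby
    · by_cases hby : ∃ c, y = T.b c
      · obtain ⟨c, rfl⟩ := hby
        push_neg at hbx
        obtain ⟨i, j, hij, hxs⟩ := hx
        have hci : c ≠ i := fun h =>
          hc ⟨i, j, hij, hxs, by rw [h]; exact Walk.start_mem_support _⟩
        have hcj : c ≠ j := fun h =>
          hc ⟨i, j, hij, hxs, by rw [h]; exact Walk.end_mem_support _⟩
        obtain ⟨Qs, Ql, h1, h2, h3⟩ := T.lp_branch hij hxs hci hcj hbx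
        refine ⟨Qs.reverse, Ql.reverse, h1.reverse, ?_, ?_⟩
        · intro v hv; rw [Walk.support_reverse, List.mem_reverse] at hv; exact h2 v hv
        · rw [Walk.length_reverse, Walk.length_reverse]; exact h3
      · push_neg at hbx
        push_neg at hby
        obtain ⟨i, j, hij, hxs⟩ := hx
        obtain ⟨l, m, hlm, hys⟩ := hy
        by_cases h1 : j = l
        · by_cases h2 : m = i
          · refine absurd ⟨i, j, hij, hxs, T.mem_symmP (z := y) ?_⟩ hc
            rw [← h2, h1]; exact hys
          · have hys' : y ∈ (T.P j m).support := by rw [h1]; exact hys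
            have hjm : j ≠ m := by rw [h1]; exact hlm
            obtain ⟨σ0, σ1, hsx⟩ := T.split_at hxs
            obtain ⟨t0, t1, hsy⟩ := T.split_at hys'
            obtain ⟨f, hfi, hfj, hfm⟩ := exists_fourth i j m hij (Ne.symm h2) hjm
            exact T.case2core hij (Ne.symm h2) (Ne.symm hfi) hjm (Ne.symm hfj)
              (Ne.symm hfm) σ0 σ1 hsx t0 t1 hsy hbx hby
        · by_cases h2 : j = m
          · by_cases h3 : l = i
            · refine absurd ⟨l, m, hlm, ?_, hys⟩ hc
              rw [h3, ← h2]; exact hxs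
            · have hys' : y ∈ (T.P j l).support := T.mem_symmP (by rw [h2]; exact hys)
              have hil : i ≠ l := fun h => h3 h.symm
              obtain ⟨σ0, σ1, hsx⟩ := T.split_at hxs
              obtain ⟨t0, t1, hsy⟩ := T.split_at hys'
              obtain ⟨f, hfi, hfj, hfl⟩ := exists_fourth i j l hij hil h1
              exact T.case2core hij hil (Ne.symm hfi) h1 (Ne.symm hfj) (Ne.symm hfl)
                σ0 σ1 hsx t0 t1 hsy hbx hby
          · by_cases h3 : i = l
            · have hxs' : x ∈ (T.P j i).support := T.mem_symmP hxs
              have hys' : y ∈ (T.P i m).support := by rw [h3]; exact hys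
              have him : i ≠ m := by rw [h3]; exact hlm
              obtain ⟨σ0, σ1, hsx⟩ := T.split_at hxs'
              obtain ⟨t0, t1, hsy⟩ := T.split_at hys'
              obtain ⟨f, hfj, hfi, hfm⟩ := exists_fourth j i m (Ne.symm hij) h2 him
              exact T.case2core (Ne.symm hij) h2 (Ne.symm hfj) him (Ne.symm hfi)
                (Ne.symm hfm) σ0 σ1 hsx t0 t1 hsy hbx hby
            · by_cases h4 : i = m
              · have hxs' : x ∈ (T.P j i).support := T.mem_symmP hxs
                have hys' : y ∈ (T.P i l).support := T.mem_symmP (by rw [h4]; exact hys)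
                have hil : i ≠ l := by rw [h4]; exact Ne.symm hlm
                obtain ⟨σ0, σ1, hsx⟩ := T.split_at hxs'
                obtain ⟨t0, t1, hsy⟩ := T.split_at hys'
                obtain ⟨f, hfj, hfi, hfl⟩ := exists_fourth j i l (Ne.symm hij) h1 hil
                exact T.case2core (Ne.symm hij) h1 (Ne.symm hfj) hil (Ne.symm hfi)
                  (Ne.symm hfl) σ0 σ1 hsx t0 t1 hsy hbx hby
              · obtain ⟨σ0, σ1, hsx⟩ := T.split_at hxs
                obtain ⟨t0, t1, hsy⟩ := T.split_at hys
                exact T.case3core hij h3 h4 h1 h2 hlm σ0 σ1 hsx t0 t1 hsy hbx hby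

end SubdivTetra

namespace StmtInfra

variable {V : Type*} {G : SimpleGraph V}

lemma earCore {s t α γ v u : V} (p1 : G.Walk s α) (p2 : G.Walk α γ) (p3 : G.Walk γ t)
    (hp : (p1.append (p2.append p3)).IsPath)
    (Wa : G.Walk v α) (Wg : G.Walk v γ)
    (hWa : Wa.IsPath) (hWg : Wg.IsPath)
    (hWap : ∀ z, z ∈ Wa.support → z ∈ (p1.append (p2.append p3)).support → z = α)
    (hWgp : ∀ z, z ∈ Wg.support → z ∈ (p1.append (p2.append p3)).support → z = γ)
    (hWW : ∀ z, z ∈ Wa.support → z ∈ Wg.support → z = v)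
    (hvp : v ∉ (p1.append (p2.append p3)).support)
    (hu : u ∈ (p1.append (p2.append p3)).support)
    (hua : u ∉ Wa.support) (hug : u ∉ Wg.support)
    (huv : G.Adj u v) (hag : α ≠ γ) :
    ∃ r : G.Walk s t, r.IsPath ∧ u ∈ r.support ∧ v ∈ r.support := by
  set p := p1.append (p2.append p3) with hpdef
  have hp1 : p1.IsPath := hp.of_append_left
  have hp23 : (p2.append p3).IsPath := hp.of_append_right
  have hp2 : p2.IsPath := hp23.of_append_left
  have hp3 : p3.IsPath := hp23.of_append_right
  have sub1 : ∀ z ∈ p1.support, z ∈ p.support := by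
    intro z hz; rw [hpdef, Walk.mem_support_append_iff]; exact Or.inl hz
  have sub2 : ∀ z ∈ p2.support, z ∈ p.support := by
    intro z hz
    rw [hpdef, Walk.mem_support_append_iff, Walk.mem_support_append_iff]
    exact Or.inr (Or.inl hz)
  have sub3 : ∀ z ∈ p3.support, z ∈ p.support := by
    intro z hz
    rw [hpdef, Walk.mem_support_append_iff, Walk.mem_support_append_iff]
    exact Or.inr (Or.inr hz)
  have hap3 : α ∉ p3.support := fun h =>
    hag (inter_eq_mid hp23 (Walk.start_mem_support p2) h)
  have hgp1 : γ ∉ p1.support := fun h =>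
    hag (inter_eq_mid hp h (by
      rw [Walk.mem_support_append_iff]
      exact Or.inr (Walk.start_mem_support p3))).symm
  have h12 : ∀ z, z ∈ p1.support → z ∈ p2.support → z = α := fun z h1 h2 =>
    inter_eq_mid hp h1 (by rw [Walk.mem_support_append_iff]; exact Or.inl h2)
  have h23 : ∀ z, z ∈ p2.support → z ∈ p3.support → z = γ := fun z h1 h2 =>
    inter_eq_mid hp23 h1 h2
  have h13 : ∀ z, z ∈ p1.support → z ∈ p3.support → False := by
    intro z h1 h3
    have hz := inter_eq_mid hp h1 (by rw [Walk.mem_support_append_iff]; exact Or.inr h3)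
    subst hz
    exact hap3 h3
  have hune_a : u ≠ α := fun h => hua (h ▸ Walk.end_mem_support Wa)
  have earsplice : u ∈ p1.support ∨ u ∈ p3.support →
      ∃ r : G.Walk s t, r.IsPath ∧ u ∈ r.support ∧ v ∈ r.support := by
    intro hu13
    refine ⟨p1.append ((Wa.reverse.append Wg).append p3), ?_, ?_, ?_⟩
    · refine chain3 hp1 (append_path hWa.reverse hWg ?_) hp3 ?_ ?_ ?_
      · intro z h1 h2
        rw [Walk.support_reverse, List.mem_reverse] at h1
        exact hWW z h1 h2
      · intro z h1 h2
        rcases (Walk.mem_support_append_iff _ _).mp h2 with h' | h'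
        · rw [Walk.support_reverse, List.mem_reverse] at h'
          exact hWap z h' (sub1 z h1)
        · have := hWgp z h' (sub1 z h1)
          subst this
          exact absurd h1 hgp1
      · intro z h1 h2
        rcases (Walk.mem_support_append_iff _ _).mp h1 with h' | h'
        · rw [Walk.support_reverse, List.mem_reverse] at h'
          have := hWap z h' (sub3 z h2)
          subst this
          exact absurd h2 hap3
        · exact hWgp z h' (sub3 z h2)
      · intro z h1 h2
        exact h13 z h1 h2
    · rw [Walk.mem_support_append_iff, Walk.mem_support_append_iff]
      rcases hu13 with h | h
      · exact Or.inl h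
      · exact Or.inr (Or.inr h)
    · rw [Walk.mem_support_append_iff, Walk.mem_support_append_iff,
        Walk.mem_support_append_iff]
      exact Or.inr (Or.inl (Or.inl (by
        rw [Walk.support_reverse, List.mem_reverse]; exact Walk.start_mem_support Wa)))
  rcases (Walk.mem_support_append_iff _ _).mp hu with hu1 | hu23
  · exact earsplice (Or.inl hu1)
  rcases (Walk.mem_support_append_iff _ _).mp hu23 with hu2 | hu3
  swap
  · exact earsplice (Or.inr hu3)
  -- u strictly inside p2 : go s → α → v → u → t
  obtain ⟨π, π', hπeq⟩ := (Walk.mem_support_iff_exists_append).mp hu2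
  have hp2' : (π.append π').IsPath := by rw [← hπeq]; exact hp2
  have subπ' : ∀ z ∈ π'.support, z ∈ p2.support := by
    intro z hz; rw [hπeq, Walk.mem_support_append_iff]; exact Or.inr hz
  have haπ' : α ∉ π'.support := fun h =>
    hune_a (inter_eq_mid hp2' (Walk.start_mem_support π) h).symm
  have htail : (π'.append p3).IsPath := by
    refine append_path hp2'.of_append_right hp3 ?_
    intro z h1 h2
    exact h23 z (subπ' z h1) h2
  have hvtail : v ∉ (π'.append p3).support := by
    intro h
    rcases (Walk.mem_support_append_iff _ _).mp h with h' | h'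
    · exact hvp (sub2 v (subπ' v h'))
    · exact hvp (sub3 v h')
  refine ⟨p1.append (Wa.reverse.append (Walk.cons huv.symm (π'.append p3))), ?_, ?_, ?_⟩
  · refine chain3 hp1 hWa.reverse (htail.cons hvtail) ?_ ?_ ?_
    · intro z h1 h2
      rw [Walk.support_reverse, List.mem_reverse] at h2
      exact hWap z h2 (sub1 z h1)
    · intro z h1 h2
      rw [Walk.support_reverse, List.mem_reverse] at h1
      rw [Walk.support_cons] at h2
      rcases List.mem_cons.mp h2 with rfl | h2'
      · rfl
      rcases (Walk.mem_support_append_iff _ _).mp h2' with h' | h'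
      · have := hWap z h1 (sub2 z (subπ' z h'))
        subst this
        exact absurd h' haπ'
      · have := hWap z h1 (sub3 z h')
        subst this
        exact absurd h' hap3
    · intro z h1 h2
      rw [Walk.support_cons] at h2
      rcases List.mem_cons.mp h2 with rfl | h2'
      · exact hvp (sub1 z h1)
      rcases (Walk.mem_support_append_iff _ _).mp h2' with h' | h'
      · have := h12 z h1 (subπ' z h')
        subst this
        exact absurd h' haπ'
      · exact h13 z h1 h'
  · rw [Walk.mem_support_append_iff, Walk.mem_support_append_iff, Walk.support_cons]
    exact Or.inr (Or.inr (List.mem_cons.mpr (Or.inr (by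
      rw [Walk.mem_support_append_iff]; exact Or.inl (Walk.start_mem_support π')))))
  · rw [Walk.mem_support_append_iff, Walk.mem_support_append_iff, Walk.support_cons]
    exact Or.inr (Or.inr (List.mem_cons.mpr (Or.inl rfl)))

end StmtInfra

namespace StmtInfra

variable {V : Type*} {G : SimpleGraph V}

/-- If `uv` is an edge and `u`, `v` each lie on some `s-t` path, then some
`s-t` path passes through both `u` and `v`. -/
lemma lemmaE {s t u v : V} (huv : G.Adj u v) {p q : G.Walk s t}
    (hp : p.IsPath) (hq : q.IsPath) (hu : u ∈ p.support) (hv : v ∈ q.support) :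
    ∃ r : G.Walk s t, r.IsPath ∧ u ∈ r.support ∧ v ∈ r.support := by
  by_cases hvp : v ∈ p.support
  · exact ⟨p, hp, hu, hvp⟩
  by_cases huq : u ∈ q.support
  · exact ⟨q, hq, huq, hv⟩
  obtain ⟨B1, B2, hB⟩ := (Walk.mem_support_iff_exists_append).mp hv
  have hqP : (B1.append B2).IsPath := by rw [← hB]; exact hq
  have hB1 : B1.IsPath := hqP.of_append_left
  have hB2 : B2.IsPath := hqP.of_append_right
  obtain ⟨a, hap, W1, W1', hW1eq, hW1clean⟩ := first_in_set B1.reverse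
    {z | z ∈ p.support} ⟨s, Walk.end_mem_support _, Walk.start_mem_support p⟩
  obtain ⟨c, hcp, W2, W2', hW2eq, hW2clean⟩ := first_in_set B2
    {z | z ∈ p.support} ⟨t, Walk.end_mem_support _, Walk.end_mem_support p⟩
  have subW1 : ∀ z ∈ W1.support, z ∈ B1.support := by
    intro z hz
    have h2 : z ∈ B1.reverse.support := by
      rw [← hW1eq, Walk.mem_support_append_iff]; exact Or.inl hz
    rwa [Walk.support_reverse, List.mem_reverse] at h2
  have subW2 : ∀ z ∈ W2.support, z ∈ B2.support := by
    intro z hz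
    rw [← hW2eq, Walk.mem_support_append_iff]; exact Or.inl hz
  have hW1path : W1.IsPath := by
    have : (W1.append W1').IsPath := by rw [hW1eq]; exact hB1.reverse
    exact this.of_append_left
  have hW2path : W2.IsPath := by
    have : (W2.append W2').IsPath := by rw [hW2eq]; exact hB2
    exact this.of_append_left
  have hWW : ∀ z, z ∈ W1.support → z ∈ W2.support → z = v := fun z h1 h2 =>
    inter_eq_mid hqP (subW1 z h1) (subW2 z h2)
  have hac : a ≠ c := by
    intro h
    subst h
    have := hWW a (Walk.end_mem_support W1) (Walk.end_mem_support W2)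
    subst this
    exact hvp hap
  have hu1 : u ∉ W1.support := fun h =>
    huq (by rw [hB, Walk.mem_support_append_iff]; exact Or.inl (subW1 u h))
  have hu2 : u ∉ W2.support := fun h =>
    huq (by rw [hB, Walk.mem_support_append_iff]; exact Or.inr (subW2 u h))
  have hvW1 : v ∈ W1.support := Walk.start_mem_support W1
  obtain ⟨p1, prest, hpeq⟩ := (Walk.mem_support_iff_exists_append).mp hap
  have hc' : c ∈ p1.support ∨ c ∈ prest.support := by
    rw [← Walk.mem_support_append_iff, ← hpeq]; exact hcp
  rcases hc' with hc' | hc'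
  · -- c comes before a on p
    obtain ⟨p1a, p1b, hp1eq⟩ := (Walk.mem_support_iff_exists_append).mp hc'
    have hpeq2 : p = p1a.append (p1b.append prest) := by
      rw [hpeq, hp1eq]; exact (Walk.append_assoc _ _ _).symm
    have hP : (p1a.append (p1b.append prest)).IsPath := by rw [← hpeq2]; exact hp
    refine earCore p1a p1b prest hP W2 W1 hW2path hW1path ?_ ?_ ?_ ?_ ?_ hu2 hu1 huv
      (Ne.symm hac)
    · intro z h1 h2; exact hW2clean z h1 (by rw [hpeq2]; exact h2)
    · intro z h1 h2; exact hW1clean z h1 (by rw [hpeq2]; exact h2)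
    · intro z h1 h2; exact hWW z h2 h1
    · rw [← hpeq2]; exact hvp
    · rw [← hpeq2]; exact hu
  · -- a comes before c on p
    obtain ⟨p2', p3', hrest⟩ := (Walk.mem_support_iff_exists_append).mp hc'
    have hpeq2 : p = p1.append (p2'.append p3') := by rw [hpeq, hrest]
    have hP : (p1.append (p2'.append p3')).IsPath := by rw [← hpeq2]; exact hp
    refine earCore p1 p2' p3' hP W1 W2 hW1path hW2path ?_ ?_ ?_ ?_ ?_ hu1 hu2 huv hac
    · intro z h1 h2; exact hW1clean z h1 (by rw [hpeq2]; exact h2)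
    · intro z h1 h2; exact hW2clean z h1 (by rw [hpeq2]; exact h2)
    · intro z h1 h2; exact hWW z h1 h2
    · rw [← hpeq2]; exact hvp
    · rw [← hpeq2]; exact hu

end StmtInfra

open StmtInfra in
/-- If the `(s,t)`-relevant part of `G` (the subgraph induced by the vertices
lying on some `(s,t)`-path) contains a subdivided tetrahedron `F(k)` as a
subgraph, then `G` has an `(s,t)`-path of length at least `d_G(s,t) + k`. -/
theorem stmt11 {V : Type*} (G : SimpleGraph V) (s t : V) (k : ℕ)
    (M : SimpleGraph V) (hMG : M ≤ G) (T : SubdivTetra M k)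
    (hedge : ∀ e ∈ M.edgeSet, ∃ i j : Fin 4, i ≠ j ∧ e ∈ (T.P i j).edges)
    (hrel : ∀ v ∈ T.supp, ∃ p : G.Walk s t, p.IsPath ∧ v ∈ p.support) :
    ∃ p : G.Walk s t, p.IsPath ∧ G.dist s t + k ≤ p.length := by
  classical
  have h01 : (0 : Fin 4) ≠ 1 := by decide
  obtain ⟨w, hadj, q01, hcons⟩ := Walk.exists_eq_cons_of_ne (T.bne_s11 h01) (T.P 0 1)
  have hu_supp : T.b 0 ∈ T.supp := T.mem_supp_of h01 (Walk.start_mem_support _)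
  have hw_supp : w ∈ T.supp := T.mem_supp_of h01 (by
    rw [hcons, Walk.support_cons]
    exact List.mem_cons.mpr (Or.inr (Walk.start_mem_support _)))
  have hne_uw : T.b 0 ≠ w := hadj.ne
  have hGadj : G.Adj (T.b 0) w := hMG hadj
  by_cases H : ∃ q : G.Walk s t, q.IsPath ∧ ∃ x' y' : V, x' ≠ y' ∧ x' ∈ T.supp ∧
      y' ∈ T.supp ∧ x' ∈ q.support ∧ y' ∈ q.support
  · obtain ⟨q, hq, x', y', hxy', hx's, hy's, hx'q, hy'q⟩ := H
    -- first vertex of the tetrahedron along q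
    obtain ⟨x, hxS, R, R', hReq, hRclean⟩ := first_in_set q T.supp ⟨x', hx'q, hx's⟩
    have hqP : (R.append R').IsPath := by rw [hReq]; exact hq
    have hR : R.IsPath := hqP.of_append_left
    have hR' : R'.IsPath := hqP.of_append_right
    -- a second tetrahedron vertex, different from x, lies on q
    have hz : ∃ z, z ∈ q.support ∧ z ∈ T.supp ∧ z ≠ x := by
      rcases eq_or_ne x' x with rfl | h
      · exact ⟨y', hy'q, hy's, fun hh => hxy' hh.symm⟩
      · exact ⟨x', hx'q, hx's, h⟩
    obtain ⟨z0, hz0q, hz0s, hz0x⟩ := hz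
    have hz0R' : z0 ∈ R'.support := by
      have : z0 ∈ R.support ∨ z0 ∈ R'.support := by
        rw [← Walk.mem_support_append_iff, hReq]; exact hz0q
      rcases this with h | h
      · exact absurd (hRclean z0 h hz0s) hz0x
      · exact h
    -- last tetrahedron vertex along q (other than x)
    obtain ⟨y, hyS, W, W', hWeq, hWclean⟩ := first_in_set R'.reverse
      {w | w ∈ T.supp ∧ w ≠ x}
      ⟨z0, by rw [Walk.support_reverse, List.mem_reverse]; exact hz0R', hz0s, hz0x⟩
    have hWWpath : (W.append W').IsPath := by rw [hWeq]; exact hR'.reverse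
    have hW : W.IsPath := hWWpath.of_append_left
    have hxW : x ∉ W.support := by
      intro h
      have := inter_eq_mid hWWpath h (Walk.end_mem_support W')
      exact hyS.2 this.symm
    have hWsupp : ∀ z', z' ∈ W.support → z' ∈ T.supp → z' = y := by
      intro z' h1 h2
      rcases eq_or_ne z' x with rfl | hne
      · exact absurd h1 hxW
      · exact hWclean z' h1 ⟨h2, hne⟩
    have hRW : ∀ z', z' ∈ R.support → z' ∈ W.support → False := by
      intro z' h1 h2
      have h2' : z' ∈ R'.support := by
        have : z' ∈ R'.reverse.support := by
          rw [← hWeq, Walk.mem_support_append_iff]; exact Or.inl h2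
        rwa [Walk.support_reverse, List.mem_reverse] at this
      have hzx := inter_eq_mid hqP h1 h2'
      subst hzx
      exact hxW h2
    obtain ⟨Qs, Ql, hQl, hQlsupp, hQlen⟩ := T.longpath hxS hyS.1 (Ne.symm hyS.2)
    have hedgesQs : ∀ e ∈ Qs.edges, e ∈ G.edgeSet := fun e he =>
      SimpleGraph.edgeSet_mono hMG (Qs.edges_subset_edgeSet he)
    have hedgesQl : ∀ e ∈ Ql.edges, e ∈ G.edgeSet := fun e he =>
      SimpleGraph.edgeSet_mono hMG (Ql.edges_subset_edgeSet he)
    refine ⟨R.append ((Ql.transfer G hedgesQl).append W.reverse), ?_, ?_⟩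
    · refine chain3 hR (hQl.transfer _) hW.reverse ?_ ?_ ?_
      · intro z h1 h2
        rw [Walk.support_transfer] at h2
        exact hRclean z h1 (hQlsupp z h2)
      · intro z h1 h2
        rw [Walk.support_transfer] at h1
        rw [Walk.support_reverse, List.mem_reverse] at h2
        exact hWsupp z h2 (hQlsupp z h1)
      · intro z h1 h2
        rw [Walk.support_reverse, List.mem_reverse] at h2
        exact hRW z h1 h2
    · have hdist := SimpleGraph.dist_le (R.append ((Qs.transfer G hedgesQs).append W.reverse))
      simp only [Walk.length_append, Walk.length_transfer, Walk.length_reverse] at hdist ⊢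
      omega
  · obtain ⟨pu, hpu, hupu⟩ := hrel (T.b 0) hu_supp
    obtain ⟨pw, hpw, hwpw⟩ := hrel w hw_supp
    obtain ⟨r, hr, hur, hwr⟩ := lemmaE hGadj hpu hpw hupu hwpw
    exact absurd ⟨r, hr, T.b 0, w, hne_uw, hu_supp, hw_supp, hur, hwr⟩ H
end

section
/- Let d, k be natural numbers and let (a₀, …, a_n) be a sequence with a₀ = 0, a_n = d, |a_{i+1} − a_i| ≤ 1 for all i, and n = d + k with k < d. Then there exists a value j ∈ {a₀ + 1, …, a₀ + k + 1} attained by exactly one index i. -/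
/-- Pigeonhole step: for a `1`-Lipschitz sequence of naturals from `0` to `d`
with exactly `d + k` steps and `k < d`, some value `j ∈ {a₀+1, …, a₀+k+1}`
is attained by exactly one index. -/
theorem stmt13 (d k n : ℕ) (a : ℕ → ℕ)
    (h0 : a 0 = 0) (hn : a n = d)
    (hstep : ∀ i < n, a (i + 1) ≤ a i + 1 ∧ a i ≤ a (i + 1) + 1)
    (hnk : n = d + k) (hkd : k < d) :
    ∃ j : ℕ, a 0 + 1 ≤ j ∧ j ≤ a 0 + k + 1 ∧
      ((Finset.range (n + 1)).filter (fun i => a i = j)).card = 1 := by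
  classical
  -- discrete intermediate value theorem
  have ivt : ∀ j ≤ d, ∃ i ≤ n, a i = j := by
    intro j hj
    have hex : ∃ i, i ≤ n ∧ j ≤ a i := ⟨n, le_refl n, by omega⟩
    set i := Nat.find hex with hi
    obtain ⟨hin, hji⟩ := Nat.find_spec hex
    rcases Nat.eq_zero_or_pos i with h | h
    · have : j ≤ a 0 := h ▸ hji
      exact ⟨0, Nat.zero_le n, by omega⟩
    · obtain ⟨m, hm⟩ : ∃ m, i = m + 1 := ⟨i - 1, by omega⟩
      have hmin := Nat.find_min hex (show m < i by omega)
      push_neg at hmin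
      have ham : a m < j := hmin (by omega)
      have hstep' := (hstep m (by omega)).1
      rw [← hi, hm] at hji
      exact ⟨m + 1, by omega, by omega⟩
  set c : ℕ → ℕ := fun j => ((Finset.range (n+1)).filter (fun i => a i = j)).card with hc
  by_contra hcon
  push_neg at hcon
  have hone : ∀ j ≤ d, 1 ≤ c j := by
    intro j hj
    obtain ⟨i, hin, hai⟩ := ivt j hj
    have hmem : i ∈ (Finset.range (n+1)).filter (fun i => a i = j) :=
      Finset.mem_filter.mpr ⟨Finset.mem_range.mpr (by omega), hai⟩
    exact Finset.card_pos.mpr ⟨i, hmem⟩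
  have htwo : ∀ j, 1 ≤ j → j ≤ k + 1 → 2 ≤ c j := by
    intro j h1 h2
    have h1' : c j ≠ 1 := hcon j (by omega) (by omega)
    have h2' := hone j (by omega)
    omega
  -- upper bound on the sum of fibers
  have hsum : ∑ j ∈ Finset.range (d+1), c j ≤ n + 1 := by
    have hdisj : ∀ x ∈ Finset.range (d+1), ∀ y ∈ Finset.range (d+1), x ≠ y →
        Disjoint ((Finset.range (n+1)).filter (fun i => a i = x))
          ((Finset.range (n+1)).filter (fun i => a i = y)) := by
      intro x _ y _ hxy
      rw [Finset.disjoint_left]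
      intro i hix hiy
      simp only [Finset.mem_filter] at hix hiy
      omega
    calc ∑ j ∈ Finset.range (d+1), c j
        = ((Finset.range (d+1)).biUnion
            (fun j => (Finset.range (n+1)).filter (fun i => a i = j))).card :=
          (Finset.card_biUnion hdisj).symm
      _ ≤ (Finset.range (n+1)).card := by
          apply Finset.card_le_card
          intro i hi
          simp only [Finset.mem_biUnion, Finset.mem_filter] at hi
          exact hi.choose_spec.2.1
      _ = n + 1 := Finset.card_range _
  -- lower bound on the sum
  have hlow : d + k + 2 ≤ ∑ j ∈ Finset.range (d+1), c j := by
    have hsplit := Finset.sum_filter_add_sum_filter_not (Finset.range (d+1))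
      (fun j => 1 ≤ j ∧ j ≤ k + 1) c
    have hcard1 : ((Finset.range (d+1)).filter (fun j => 1 ≤ j ∧ j ≤ k + 1)).card = k + 1 := by
      have : (Finset.range (d+1)).filter (fun j => 1 ≤ j ∧ j ≤ k + 1) = Finset.Icc 1 (k+1) := by
        ext j
        simp only [Finset.mem_filter, Finset.mem_range, Finset.mem_Icc]
        omega
      rw [this, Nat.card_Icc]
      omega
    have hcard2 : ((Finset.range (d+1)).filter (fun j => ¬(1 ≤ j ∧ j ≤ k + 1))).card = d - k := by
      have := Finset.card_filter_add_card_filter_not (s := Finset.range (d+1))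
        (p := fun j => 1 ≤ j ∧ j ≤ k + 1)
      rw [Finset.card_range] at this
      omega
    have hb1 : (k + 1) * 2 ≤ ∑ j ∈ (Finset.range (d+1)).filter (fun j => 1 ≤ j ∧ j ≤ k + 1), c j := by
      calc (k+1) * 2 = ((Finset.range (d+1)).filter (fun j => 1 ≤ j ∧ j ≤ k + 1)).card • 2 := by
            rw [hcard1, smul_eq_mul]
        _ ≤ _ := Finset.card_nsmul_le_sum _ _ _ (fun j hj => by
            simp only [Finset.mem_filter] at hj
            exact htwo j hj.2.1 hj.2.2)
    have hb2 : (d - k) * 1 ≤ ∑ j ∈ (Finset.range (d+1)).filter (fun j => ¬(1 ≤ j ∧ j ≤ k + 1)), c j := by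
      calc (d - k) * 1 = ((Finset.range (d+1)).filter (fun j => ¬(1 ≤ j ∧ j ≤ k + 1))).card • 1 := by
            rw [hcard2, smul_eq_mul]
        _ ≤ _ := Finset.card_nsmul_le_sum _ _ _ (fun j hj => by
            simp only [Finset.mem_filter, Finset.mem_range] at hj
            exact hone j (by omega))
    omega
  omega
end
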